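/- arXiv:2406.11051 — 10 statements merged into one kernel-verified Lean document; each statement's English description precedes it below -/
import Mathlib

section
/- Let a ≥ 1 be an integer, b ≥ 0 a real number, and r, s integers with 1 ≤ r < s. Let u : ℕ → ℝ satisfy u(1) = 0, and let g : ℕ → ℝ satisfy g(j) ≥ 0 for all j and g(s) = 0. Assume: (a) for every integer i with r+1 ≤ i ≤ s−1, u(s−i+1) ≤ u(s−i) + 2b/(a·i); and (b) for every integer i with 1 ≤ i ≤ r, u(s−i+1) ≤ u(s−i) + (b − a² + a + a(a−1)/2 + g(s−i+1) − g(s−i))/(a·i) + a. Then u(s) ≤ (b/a)·(2·ln(s−1) − ln r + 1) − ((a−1)/2)·ln r + r·a. -/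
open Finset

lemma sum_inv_Icc_le_log (m : ℕ) (hm : 1 ≤ m) :
    ∀ n, m ≤ n → ∑ i ∈ Finset.Icc (m+1) n, (1 : ℝ)/(i:ℝ) ≤ Real.log n - Real.log m := by
  intro n hn
  induction n, hn using Nat.le_induction with
  | base => simp [Finset.Icc_eq_empty_of_lt (Nat.lt_succ_self m)]
  | succ n hn ih =>
    rw [Finset.sum_Icc_succ_top (by omega : m + 1 ≤ n + 1)]
    have h0 : (0:ℝ) < (n:ℝ) := by
      have : 1 ≤ n := le_trans hm hn
      exact_mod_cast Nat.pos_of_ne_zero (by omega)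
    have h1 : (0:ℝ) < (n:ℝ) + 1 := by linarith
    have hlog : Real.log ((n:ℝ)/((n:ℝ)+1)) ≤ (n:ℝ)/((n:ℝ)+1) - 1 :=
      Real.log_le_sub_one_of_pos (by positivity)
    rw [Real.log_div (ne_of_gt h0) (ne_of_gt h1)] at hlog
    have hfrac : (n:ℝ)/((n:ℝ)+1) - 1 = -(1/((n:ℝ)+1)) := by field_simp; ring
    rw [hfrac] at hlog
    push_cast
    linarith

lemma log_le_sum_inv (n : ℕ) (hn : 1 ≤ n) :
    Real.log ((n:ℝ)+1) ≤ ∑ i ∈ Finset.Icc 1 n, (1 : ℝ)/(i:ℝ) := by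
  induction n, hn using Nat.le_induction with
  | base =>
    simp only [Finset.Icc_self, Finset.sum_singleton, Nat.cast_one]
    have := Real.log_le_sub_one_of_pos (x := (2:ℝ)) (by norm_num)
    norm_num at this ⊢
    linarith
  | succ n hn ih =>
    rw [Finset.sum_Icc_succ_top (by omega : 1 ≤ n + 1)]
    have h1 : (0:ℝ) < (n:ℝ) + 1 := by positivity
    have hlog : Real.log (((n:ℝ)+2)/((n:ℝ)+1)) ≤ ((n:ℝ)+2)/((n:ℝ)+1) - 1 :=
      Real.log_le_sub_one_of_pos (by positivity)
    rw [Real.log_div (by linarith) (ne_of_gt h1)] at hlog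
    have hfrac : ((n:ℝ)+2)/((n:ℝ)+1) - 1 = 1/((n:ℝ)+1) := by field_simp; ring
    rw [hfrac] at hlog
    push_cast
    have h2 : ((n:ℝ)+1) + 1 = (n:ℝ) + 2 := by ring
    rw [h2]
    linarith

lemma sum_inv_le_one_add_log (n : ℕ) (hn : 1 ≤ n) :
    ∑ i ∈ Finset.Icc 1 n, (1 : ℝ)/(i:ℝ) ≤ 1 + Real.log n := by
  have hsplit : Finset.Icc 1 n = insert 1 (Finset.Icc 2 n) := by
    ext x; simp only [Finset.mem_Icc, Finset.mem_insert]; omega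
  rw [hsplit, Finset.sum_insert (by simp)]
  have := sum_inv_Icc_le_log 1 le_rfl n hn
  simp only [Nat.cast_one, Real.log_one] at this ⊢
  norm_num at this ⊢
  linarith



/-- Arithmetic core of Lemma 2.10(i): with `u 1 = 0`, `g ≥ 0`, `g s = 0`, and the
increment bounds from Corollary 2.7 (bound (a) for `r+1 ≤ i ≤ s-1` and bound (b)
for `1 ≤ i ≤ r`), one gets
`u s ≤ (b/a)·(2·ln(s-1) − ln r + 1) − ((a−1)/2)·ln r + r·a`. -/
theorem stmt1 (a : ℕ) (ha : 1 ≤ a) (b : ℝ) (hb : 0 ≤ b) (r s : ℕ)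
    (hr : 1 ≤ r) (hrs : r < s)
    (u : ℕ → ℝ) (hu1 : u 1 = 0)
    (g : ℕ → ℝ) (hg : ∀ j, 0 ≤ g j) (hgs : g s = 0)
    (hstepA : ∀ i : ℕ, r + 1 ≤ i → i ≤ s - 1 →
      u (s - i + 1) ≤ u (s - i) + 2 * b / (a * i))
    (hstepB : ∀ i : ℕ, 1 ≤ i → i ≤ r →
      u (s - i + 1) ≤ u (s - i) +
        (b - (a : ℝ) ^ 2 + a + (a : ℝ) * ((a : ℝ) - 1) / 2
          + g (s - i + 1) - g (s - i)) / (a * i) + a) :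
    u s ≤ (b / a) * (2 * Real.log ((s : ℝ) - 1) - Real.log r + 1)
      - (((a : ℝ) - 1) / 2) * Real.log r + r * a := by
  have ha0 : (0:ℝ) < (a:ℝ) := by exact_mod_cast ha
  set c : ℕ → ℝ := fun i => if i ≤ r then
      (b - (a:ℝ)^2 + (a:ℝ) + (a:ℝ)*((a:ℝ)-1)/2 + g (s-i+1) - g (s-i)) / ((a:ℝ)*(i:ℝ)) + (a:ℝ)
    else 2*b/((a:ℝ)*(i:ℝ)) with hc
  -- single-step bound
  have hstep : ∀ i, 1 ≤ i → i ≤ s - 1 → u (s-i+1) ≤ u (s-i) + c i := by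
    intro i h1 h2
    by_cases hir : i ≤ r
    · have := hstepB i h1 hir
      simp only [hc, if_pos hir]
      linarith
    · simp only [hc, if_neg hir]
      exact hstepA i (by omega) h2
  -- telescoping
  have key : ∀ k, 1 ≤ k → k ≤ s → u k ≤ ∑ i ∈ Finset.Icc (s-k+1) (s-1), c i := by
    intro k hk1
    induction k, hk1 using Nat.le_induction with
    | base =>
      intro _
      have he : Finset.Icc (s-1+1) (s-1) = ∅ := Finset.Icc_eq_empty_of_lt (by omega)
      rw [he, Finset.sum_empty, hu1]
    | succ k hk ih =>
      intro hks
      have ihk := ih (by omega)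
      have hstepk := hstep (s-k) (by omega) (by omega)
      rw [show s - (s-k) = k from by omega] at hstepk
      have hins : Finset.Icc (s-(k+1)+1) (s-1) = insert (s-k) (Finset.Icc (s-k+1) (s-1)) := by
        ext x; simp only [Finset.mem_Icc, Finset.mem_insert]; omega
      rw [hins, Finset.sum_insert (by simp only [Finset.mem_Icc]; omega)]
      linarith
  have hus : u s ≤ ∑ i ∈ Finset.Icc 1 (s-1), c i := by
    have := key s (by omega) le_rfl
    rwa [show s - s + 1 = 1 from by omega] at this
  -- split the sum
  have hsplit : ∑ i ∈ Finset.Icc 1 (s-1), c i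
      = ∑ i ∈ Finset.Icc 1 r, c i + ∑ i ∈ Finset.Icc (r+1) (s-1), c i := by
    rw [← Finset.sum_union]
    · apply Finset.sum_congr _ (fun _ _ => rfl)
      ext x; simp only [Finset.mem_union, Finset.mem_Icc]; omega
    · rw [Finset.disjoint_left]
      intro x hx hx2
      simp only [Finset.mem_Icc] at hx hx2
      omega
  -- B part
  have hBterm : ∀ i ∈ Finset.Icc 1 r, c i
      = (b - (a:ℝ)*((a:ℝ)-1)/2)/(a:ℝ) * (1/(i:ℝ))
        + (g (s-i+1) - g (s-i))/((a:ℝ)*(i:ℝ)) + (a:ℝ) := by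
    intro i hi
    simp only [Finset.mem_Icc] at hi
    have hi0 : (0:ℝ) < (i:ℝ) := by exact_mod_cast hi.1
    simp only [hc, if_pos hi.2]
    field_simp
    ring
  have hBsum : ∑ i ∈ Finset.Icc 1 r, c i
      = (b - (a:ℝ)*((a:ℝ)-1)/2)/(a:ℝ) * (∑ i ∈ Finset.Icc 1 r, (1:ℝ)/(i:ℝ))
        + (∑ i ∈ Finset.Icc 1 r, (g (s-i+1) - g (s-i))/((a:ℝ)*(i:ℝ))) + (r:ℝ) * (a:ℝ) := by
    rw [Finset.sum_congr rfl hBterm, Finset.sum_add_distrib, Finset.sum_add_distrib,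
      ← Finset.mul_sum, Finset.sum_const, Nat.card_Icc]
    simp only [nsmul_eq_mul]
    push_cast [show r + 1 - 1 = r from by omega]
    ring
  -- g-part nonpositive
  have hgsum : ∀ m, 1 ≤ m → m ≤ r →
      ∑ i ∈ Finset.Icc 1 m, (g (s-i+1) - g (s-i))/((a:ℝ)*(i:ℝ))
        ≤ -(g (s-m)/((a:ℝ)*(m:ℝ))) := by
    intro m hm1
    induction m, hm1 using Nat.le_induction with
    | base =>
      intro _
      rw [Finset.Icc_self, Finset.sum_singleton,
        show s - 1 + 1 = s from by omega, hgs]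
      apply le_of_eq
      push_cast
      ring
    | succ m hm ih =>
      intro hmr
      have ihm := ih (by omega)
      rw [Finset.sum_Icc_succ_top (by omega : 1 ≤ m+1),
        show s - (m+1) + 1 = s - m from by omega]
      have hm0 : (0:ℝ) < (m:ℝ) := by exact_mod_cast hm
      have h1 : g (s-m) / ((a:ℝ)*((m:ℝ)+1)) ≤ g (s-m)/((a:ℝ)*(m:ℝ)) := by
        have hd : (0:ℝ) < (a:ℝ)*(m:ℝ) := by positivity
        have hd2 : (a:ℝ)*(m:ℝ) ≤ (a:ℝ)*((m:ℝ)+1) := by nlinarith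
        exact div_le_div_of_nonneg_left (hg _) hd hd2
      have h2 : (g (s-m) - g (s-(m+1)))/((a:ℝ)*((m:ℝ)+1))
          = g (s-m)/((a:ℝ)*((m:ℝ)+1)) - g (s-(m+1))/((a:ℝ)*((m:ℝ)+1)) := sub_div _ _ _
      push_cast
      rw [h2]
      linarith
  -- A part
  have hAterm : ∀ i ∈ Finset.Icc (r+1) (s-1), c i = (2*b/(a:ℝ)) * (1/(i:ℝ)) := by
    intro i hi
    simp only [Finset.mem_Icc] at hi
    have hi0 : (0:ℝ) < (i:ℝ) := by exact_mod_cast (by omega : 0 < i)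
    simp only [hc, if_neg (by omega : ¬ i ≤ r)]
    rw [div_mul_div_comm, mul_one]
  have hAsum : ∑ i ∈ Finset.Icc (r+1) (s-1), c i
      = (2*b/(a:ℝ)) * (∑ i ∈ Finset.Icc (r+1) (s-1), (1:ℝ)/(i:ℝ)) := by
    rw [Finset.sum_congr rfl hAterm, ← Finset.mul_sum]
  set HB := ∑ i ∈ Finset.Icc 1 r, (1:ℝ)/(i:ℝ) with hHB
  set HA := ∑ i ∈ Finset.Icc (r+1) (s-1), (1:ℝ)/(i:ℝ) with hHA
  set L0 := Real.log (r:ℝ) with hL0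
  set L1 := Real.log ((s:ℝ)-1) with hL1
  have hcast1 : ((s-1 : ℕ):ℝ) = (s:ℝ) - 1 := by
    push_cast [Nat.cast_sub (by omega : 1 ≤ s)]; ring
  have hHAle : HA ≤ L1 - L0 := by
    have := sum_inv_Icc_le_log r hr (s-1) (by omega)
    rwa [hcast1] at this
  have hHBle : HB ≤ 1 + L0 := sum_inv_le_one_add_log r hr
  have hHBge : L0 ≤ HB := by
    have h1 := log_le_sum_inv r hr
    have h2 : Real.log (r:ℝ) ≤ Real.log ((r:ℝ)+1) := by
      apply Real.log_le_log (by exact_mod_cast hr)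
      linarith
    linarith
  -- combine
  have hgr := hg (s-r)
  have hgsumr := hgsum r hr le_rfl
  have hgpos : (0:ℝ) < (a:ℝ)*(r:ℝ) := by
    have : (0:ℝ) < (r:ℝ) := by exact_mod_cast hr
    positivity
  have hgle : ∑ i ∈ Finset.Icc 1 r, (g (s-i+1) - g (s-i))/((a:ℝ)*(i:ℝ)) ≤ 0 := by
    have : 0 ≤ g (s-r)/((a:ℝ)*(r:ℝ)) := div_nonneg hgr (le_of_lt hgpos)
    linarith
  have hcoef : (b - (a:ℝ)*((a:ℝ)-1)/2)/(a:ℝ) = b/(a:ℝ) - ((a:ℝ)-1)/2 := by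
    rw [div_eq_iff (ne_of_gt ha0)]
    field_simp
  have hba : (0:ℝ) ≤ b/(a:ℝ) := div_nonneg hb (le_of_lt ha0)
  have ha1 : (0:ℝ) ≤ ((a:ℝ)-1)/2 := by
    have : (1:ℝ) ≤ (a:ℝ) := by exact_mod_cast ha
    linarith
  have e1 : (b/(a:ℝ)) * HB ≤ (b/(a:ℝ)) * (1 + L0) := mul_le_mul_of_nonneg_left hHBle hba
  have e2 : (((a:ℝ)-1)/2) * L0 ≤ (((a:ℝ)-1)/2) * HB := mul_le_mul_of_nonneg_left hHBge ha1
  have e3 : (2*b/(a:ℝ)) * HA ≤ (2*b/(a:ℝ)) * (L1 - L0) := by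
    apply mul_le_mul_of_nonneg_left hHAle
    positivity
  rw [hsplit, hBsum, hAsum, hcoef] at hus
  have hfinal : (b/(a:ℝ) - ((a:ℝ)-1)/2) * HB = (b/(a:ℝ))*HB - (((a:ℝ)-1)/2)*HB := by ring
  rw [hfinal] at hus
  have heq : (b/(a:ℝ))*(2*L1-L0+1) - (((a:ℝ)-1)/2)*L0 + (r:ℝ)*(a:ℝ)
      = (b/(a:ℝ))*(1+L0) - (((a:ℝ)-1)/2)*L0 + (r:ℝ)*(a:ℝ) + (2*b/(a:ℝ))*(L1-L0) := by
    ring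
  rw [heq]
  linarith
end

section
/- Let a ≥ 1 be an integer, b ≥ 0 a real number, and r, s integers with 2 ≤ s ≤ r. Let u : ℕ → ℝ satisfy u(1) = 0, and let g : ℕ → ℝ satisfy g(j) ≥ 0 for all j and g(s) = 0. Assume that for every integer i with 1 ≤ i ≤ s−1, u(s−i+1) ≤ u(s−i) + (b − a² + a + a(a−1)/2 + g(s−i+1) − g(s−i))/(a·i) + a. Then u(s) ≤ (b/a)·(1 + ln r) − ((a−1)/2)·ln r + r·a. -/
set_option maxHeartbeats 1000000


/-- Arithmetic core of Lemma 2.10(ii): with `u 1 = 0`, `g ≥ 0`, `g s = 0`, and the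
increment bound from Corollary 2.7 for all `1 ≤ i ≤ s-1`, one gets, for `s ≤ r`,
`u s ≤ (b/a)·(1 + ln r) − ((a−1)/2)·ln r + r·a`. -/

theorem stmt2 (a : ℕ) (ha : 1 ≤ a) (b : ℝ) (hb : 0 ≤ b) (r s : ℕ)
    (hs : 2 ≤ s) (hsr : s ≤ r)
    (u : ℕ → ℝ) (hu1 : u 1 = 0)
    (g : ℕ → ℝ) (hg : ∀ j, 0 ≤ g j) (hgs : g s = 0)
    (hstep : ∀ i : ℕ, 1 ≤ i → i ≤ s - 1 →
      u (s - i + 1) ≤ u (s - i) +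
        (b - (a : ℝ) ^ 2 + a + (a : ℝ) * ((a : ℝ) - 1) / 2
          + g (s - i + 1) - g (s - i)) / (a * i) + a) :
    u s ≤ (b / a) * (1 + Real.log r) - (((a : ℝ) - 1) / 2) * Real.log r + r * a := by
  have ha1 : (1:ℝ) ≤ (a:ℝ) := by exact_mod_cast ha
  have ha0 : (0:ℝ) < (a:ℝ) := lt_of_lt_of_le one_pos ha1
  set c : ℝ := b - (a:ℝ)^2 + a + (a:ℝ)*((a:ℝ)-1)/2 with hc
  -- invariant
  have key : ∀ j : ℕ, 1 ≤ j → j ≤ s →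
      u j ≤ (c/a) * ((harmonic (s-1) : ℝ) - (harmonic (s-j) : ℝ))
            + ((j:ℝ)-1)*(a:ℝ) + g j / ((a:ℝ) * (((s-j : ℕ):ℝ)+1)) := by
    intro j
    induction j with
    | zero => intro h; omega
    | succ n ih =>
      intro _ hns
      rcases Nat.eq_zero_or_pos n with hn0 | hn1
      · subst hn0
        norm_num [hu1]
        exact div_nonneg (hg 1) (by positivity)
      · have hns' : n ≤ s := by omega
        have ihn := ih hn1 hns'
        -- apply hstep with i = s - n
        have hi1 : 1 ≤ s - n := by omega
        have hi2 : s - n ≤ s - 1 := by omega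
        have e1 : s - (s - n) = n := by omega
        have e2 : s - (s - n) + 1 = n + 1 := by omega
        have hst := hstep (s - n) hi1 hi2
        rw [e1] at hst
        set K : ℝ := ((s - n : ℕ) : ℝ) with hK
        have hK1 : (1:ℝ) ≤ K := by rw [hK]; exact_mod_cast hi1
        have hK0 : (0:ℝ) < K := lt_of_lt_of_le one_pos hK1
        -- harmonic recursion : harmonic (s-n) = harmonic (s-n-1) + 1/(s-n)
        have hsn : s - n = (s - n - 1) + 1 := by omega
        have hharm : (harmonic (s - n) : ℝ) = (harmonic (s - n - 1) : ℝ) + 1 / K := by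
          rw [hsn, harmonic_succ]
          push_cast
          rw [hK, hsn]
          push_cast
          ring
        have esub : s - (n+1) = s - n - 1 := by omega
        have ecast : ((s - n - 1 : ℕ) : ℝ) + 1 = K := by
          rw [hK]
          have : (s - n - 1) + 1 = s - n := by omega
          exact_mod_cast congrArg (Nat.cast (R := ℝ)) this
        rw [esub]
        -- g monotone in denominator
        have hgmono : g n / ((a:ℝ) * (K + 1)) ≤ g n / ((a:ℝ) * K) := by
          apply div_le_div_of_nonneg_left (hg n) (by positivity)
          nlinarith
        have hcastsn : ((s - n : ℕ):ℝ) = K := rfl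
        have hstep' : u (n+1) ≤ u n + (c + g (n+1) - g n) / ((a:ℝ) * K) + a := by
          have : ((s - n : ℕ) : ℝ) = K := rfl
          calc u (n+1) ≤ u n + (b - (a:ℝ)^2 + a + (a:ℝ)*((a:ℝ)-1)/2 + g (n+1) - g n) / ((a:ℝ) * ((s-n : ℕ):ℝ)) + a := hst
            _ = u n + (c + g (n+1) - g n) / ((a:ℝ) * K) + a := by rw [hc, this]
        have ihn' : u n ≤ (c/a) * ((harmonic (s-1) : ℝ) - ((harmonic (s-n-1) : ℝ) + 1/K))
            + ((n:ℝ)-1)*(a:ℝ) + g n / ((a:ℝ) * (K+1)) := by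
          calc u n ≤ (c/a) * ((harmonic (s-1) : ℝ) - (harmonic (s-n) : ℝ))
              + ((n:ℝ)-1)*(a:ℝ) + g n / ((a:ℝ) * (((s-n : ℕ):ℝ)+1)) := ihn
            _ = _ := by rw [hharm, hcastsn]
        rw [ecast]
        have ed1 : (c + g (n+1) - g n) / ((a:ℝ) * K) = c/((a:ℝ)*K) + g (n+1)/((a:ℝ)*K) - g n/((a:ℝ)*K) := by ring
        have ed2 : (c/(a:ℝ)) * (1/K) = c/((a:ℝ)*K) := by
          field_simp
        push_cast
        rw [ed1] at hstep'
        calc u (n+1) ≤ _ := hstep'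
          _ ≤ (c/a) * ((harmonic (s-1) : ℝ) - (harmonic (s-n-1) : ℝ)) + ((n:ℝ)+1-1)*(a:ℝ)
              + g (n+1) / ((a:ℝ) * K) := by
            have := mul_comm (c/(a:ℝ)) (1/K)
            nlinarith [hgmono, ed2]
  have hkey := key s (by omega) le_rfl
  simp only [Nat.sub_self] at hkey
  rw [hgs] at hkey
  have hharm0 : (harmonic 0 : ℝ) = 0 := by norm_num [harmonic]
  rw [hharm0] at hkey
  simp only [zero_div, sub_zero, add_zero] at hkey
  -- now u s ≤ (c/a) * harmonic (s-1) + (s-1) a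
  set H : ℝ := (harmonic (s-1) : ℝ) with hH
  have hca : c / (a:ℝ) = b/(a:ℝ) - ((a:ℝ)-1)/2 := by
    rw [hc]; field_simp; ring
  have hs1 : (1:ℝ) ≤ ((s-1 : ℕ):ℝ) := by
    have : 1 ≤ s - 1 := by omega
    exact_mod_cast this
  have hsR : ((s:ℕ):ℝ) = ((s-1:ℕ):ℝ) + 1 := by
    have : s = (s-1) + 1 := by omega
    exact_mod_cast congrArg (Nat.cast (R := ℝ)) this
  have hHub : H ≤ 1 + Real.log ((s-1:ℕ):ℝ) := harmonic_le_one_add_log (s-1)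
  have hloglog : Real.log ((s-1:ℕ):ℝ) ≤ Real.log r := by
    apply Real.log_le_log (by linarith)
    have : (s-1:ℕ) ≤ r := by omega
    exact_mod_cast this
  have hHlb : Real.log (s:ℝ) ≤ H := by
    have htmp := log_add_one_le_harmonic (s-1)
    have hn : s - 1 + 1 = s := by omega
    rw [hn] at htmp
    exact htmp
  have hba : 0 ≤ b / (a:ℝ) := by positivity
  have hcoef : 0 ≤ ((a:ℝ)-1)/2 := by linarith
  have hsr' : (s:ℝ) ≤ (r:ℝ) := by exact_mod_cast hsr
  have hs0 : (0:ℝ) < (s:ℝ) := by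
    have : (0:ℕ) < s := by omega
    exact_mod_cast this
  have hr0 : (0:ℝ) < (r:ℝ) := lt_of_lt_of_le hs0 hsr'
  have hlogdiff : Real.log (r:ℝ) - Real.log (s:ℝ) ≤ (r:ℝ) - (s:ℝ) := by
    have h1 : Real.log ((r:ℝ)/(s:ℝ)) ≤ (r:ℝ)/(s:ℝ) - 1 :=
      Real.log_le_sub_one_of_pos (by positivity)
    rw [Real.log_div (ne_of_gt hr0) (ne_of_gt hs0)] at h1
    have h2 : (r:ℝ)/(s:ℝ) - 1 = ((r:ℝ)-(s:ℝ))/(s:ℝ) := by field_simp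
    have h3 : ((r:ℝ)-(s:ℝ))/(s:ℝ) ≤ (r:ℝ)-(s:ℝ) := by
      apply div_le_self (by linarith)
      have : (1:ℕ) ≤ s := by omega
      exact_mod_cast this
    linarith
  have hub2 : (b/(a:ℝ)) * H ≤ (b/(a:ℝ)) * (1 + Real.log r) :=
    mul_le_mul_of_nonneg_left (by linarith) hba
  have hlb2 : (((a:ℝ)-1)/2) * Real.log (s:ℝ) ≤ (((a:ℝ)-1)/2) * H :=
    mul_le_mul_of_nonneg_left hHlb hcoef
  have hd1 : (((a:ℝ)-1)/2) * (Real.log (r:ℝ) - Real.log (s:ℝ)) ≤ (((a:ℝ)-1)/2) * ((r:ℝ)-(s:ℝ)) :=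
    mul_le_mul_of_nonneg_left hlogdiff hcoef
  have hd2 : (((a:ℝ)-1)/2) * ((r:ℝ)-(s:ℝ)) ≤ (a:ℝ) * ((r:ℝ)-(s:ℝ)) := by
    apply mul_le_mul_of_nonneg_right (by linarith) (by linarith)
  have hsm1 : ((s-1:ℕ):ℝ) = (s:ℝ) - 1 := by
    have : 1 ≤ s := by omega
    push_cast [this]; ring
  rw [hca] at hkey
  nlinarith [hkey, hub2, hlb2, hd1, hd2]
end

section
/- Let a and b be positive integers, and define f(k; a, b) recursively for positive integers k by: f(k; a, b) = (k−1)(a+1) if 1 ≤ k ≤ b; f(k; a, b) = k·a if b < k ≤ 2b; and f(k; a, b) = ⌊ k·(f(k−b; a, b) + a − b)/(k−b) ⌋ if k > 2b. If k > b and a − b − 1 ≥ 0, then f(k; a, b) ≥ k·a − 1 + (k·(a−b−1)/b)·Σ_{j=2}^{⌈k/b⌉−1} 1/j. -/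
/-- The function `f(k; a, b)` from Lemma 6 of Hefetz–Mikalacki–Stojaković:
`f(k) = (k−1)(a+1)` if `k ≤ b`, `f(k) = k·a` if `b < k ≤ 2b`, and
`f(k) = ⌊k·(f(k−b) + a − b)/(k−b)⌋` if `k > 2b`.
(For `b = 0` — excluded by the hypotheses of the lemma — the recursive case
cannot occur since then every `k` satisfies `k ≤ 2b` or lands in a junk value.) -/
def boxF (a b : ℕ) (k : ℕ) : ℤ :=
  if k ≤ b then ((k : ℤ) - 1) * ((a : ℤ) + 1)
  else if k ≤ 2 * b then (k : ℤ) * a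
  else if hb : b = 0 then 0
  else ⌊((k : ℚ) * ((boxF a b (k - b) : ℚ) + (a : ℚ) - (b : ℚ))) / ((k : ℚ) - (b : ℚ))⌋
termination_by k
decreasing_by
  exact Nat.sub_lt (by omega) (by omega)

lemma boxF_key (a b : ℕ) (ha : 1 ≤ a) (hb : 1 ≤ b) (hab : b + 1 ≤ a) :
    ∀ k : ℕ, b < k → (boxF a b k : ℚ) ≥ (k : ℚ) * a - 1 +
      ((k : ℚ) * ((a : ℚ) - b - 1) / b) *
        ∑ j ∈ Finset.Icc 2 ((⌈(k : ℚ) / (b : ℚ)⌉.toNat) - 1), (1 : ℚ) / j := by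
  intro k
  induction k using Nat.strong_induction_on with
  | _ k IH =>
  intro hkb
  have hB : (0:ℚ) < b := by exact_mod_cast hb
  by_cases h2 : k ≤ 2 * b
  · -- base case b < k ≤ 2b
    have hk2 : (k:ℚ) ≤ 2 * b := by exact_mod_cast h2
    have hceil : ⌈(k:ℚ)/b⌉ ≤ 2 := by
      rw [Int.ceil_le, div_le_iff₀ hB]
      push_cast
      linarith
    rw [Finset.Icc_eq_empty (by omega), Finset.sum_empty, mul_zero, add_zero]
    rw [boxF, if_neg (by omega), if_pos h2]
    push_cast
    linarith
  · -- recursive case k > 2b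
    push_neg at h2
    have hb0 : b ≠ 0 := by omega
    have hbj : b < k - b := by omega
    have IH' := IH (k - b) (by omega) hbj
    have hJ : ((k - b : ℕ) : ℚ) = (k:ℚ) - b := by
      push_cast [Nat.cast_sub hkb.le]; ring
    have hKB : (0:ℚ) < (k:ℚ) - b := by
      have : (b:ℚ) < k := by exact_mod_cast hkb
      linarith
    have hceilj : ⌈((k - b : ℕ):ℚ)/b⌉ = ⌈(k:ℚ)/b⌉ - 1 := by
      rw [hJ, sub_div, div_self hB.ne', Int.ceil_sub_one]
    set m : ℤ := ⌈(k:ℚ)/b⌉ with hm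
    have hm3 : 3 ≤ m := by
      have h2b : ((2*b:ℕ):ℚ) < k := by exact_mod_cast h2
      have : ((2:ℤ):ℚ) < (k:ℚ)/b := by
        rw [lt_div_iff₀ hB]; push_cast at h2b ⊢; linarith
      have := Int.lt_ceil.mpr this
      omega
    have hMcast : ((m.toNat - 1 : ℕ) : ℚ) = (m:ℚ) - 1 := by
      have : ((m.toNat - 1 : ℕ) : ℤ) = m - 1 := by omega
      exact_mod_cast this
    obtain ⟨n, hn, hn2⟩ : ∃ n, m.toNat - 1 = n + 1 ∧ 1 ≤ n := ⟨m.toNat - 2, by omega, by omega⟩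
    have hidx : ⌈((k - b : ℕ):ℚ)/b⌉.toNat - 1 = n := by rw [hceilj]; omega
    rw [hidx] at IH'
    rw [hn, Finset.sum_Icc_succ_top (by omega)]
    rw [boxF, if_neg (by omega), if_neg (by omega), dif_neg hb0]
    set F : ℚ := (boxF a b (k - b) : ℚ) with hF
    set q : ℚ := ((k : ℚ) * (F + (a : ℚ) - (b : ℚ))) / ((k : ℚ) - (b : ℚ)) with hq
    have hfloor : q - 1 < (⌊q⌋:ℚ) := Int.sub_one_lt_floor q
    set S : ℚ := ∑ j ∈ Finset.Icc 2 n, (1:ℚ)/j with hS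
    rw [hJ] at IH'
    -- key lower bound for q
    have hq1 : (k:ℚ)*a + (k:ℚ)*((a:ℚ)-b-1)/((k:ℚ)-b) + ((k:ℚ)*((a:ℚ)-b-1)/b)*S ≤ q := by
      have h0 : (0:ℚ) ≤ (k:ℚ)/((k:ℚ)-b) := by positivity
      have hmul := mul_le_mul_of_nonneg_left
        (show ((k:ℚ)-b)*a - 1 + (((k:ℚ)-b)*((a:ℚ)-b-1)/b)*S + ((a:ℚ) - b) ≤ F + ((a:ℚ) - b) from by
          linarith [IH']) h0
      have e1 : ((k:ℚ)/((k:ℚ)-b)) * (F + ((a:ℚ) - b)) = q := by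
        rw [hq]; ring
      have e2 : ((k:ℚ)/((k:ℚ)-b)) * (((k:ℚ)-b)*a - 1 + (((k:ℚ)-b)*((a:ℚ)-b-1)/b)*S + ((a:ℚ) - b))
          = (k:ℚ)*a + (k:ℚ)*((a:ℚ)-b-1)/((k:ℚ)-b) + ((k:ℚ)*((a:ℚ)-b-1)/b)*S := by
        field_simp
        ring
      rw [e1, e2] at hmul
      exact hmul
    -- comparing 1/(k-b) with 1/(b*(n+1))
    have hncast : ((n+1:ℕ):ℚ) = (m:ℚ) - 1 := by rw [← hn]; exact hMcast
    have hklem : (k:ℚ) ≤ m * b := by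
      have := Int.le_ceil ((k:ℚ)/b)
      rw [div_le_iff₀ hB] at this
      exact this
    have hKBle : (k:ℚ) - b ≤ b * ((n+1:ℕ):ℚ) := by
      rw [hncast]; nlinarith
    have hA : (0:ℚ) ≤ (a:ℚ) - b - 1 := by
      have : ((b:ℚ)+1) ≤ a := by exact_mod_cast hab
      linarith
    have hnpos : (0:ℚ) < ((n+1:ℕ):ℚ) := by positivity
    have hq2 : (k:ℚ)*((a:ℚ)-b-1)/(b*((n+1:ℕ):ℚ)) ≤ (k:ℚ)*((a:ℚ)-b-1)/((k:ℚ)-b) := by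
      rw [div_le_div_iff₀ (by positivity) hKB]
      have hKA : (0:ℚ) ≤ (k:ℚ)*((a:ℚ)-b-1) := by positivity
      nlinarith
    have hexp : ((k:ℚ)*((a:ℚ)-b-1)/b) * (S + 1/((n+1:ℕ):ℚ))
        = ((k:ℚ)*((a:ℚ)-b-1)/b)*S + (k:ℚ)*((a:ℚ)-b-1)/(b*((n+1:ℕ):ℚ)) := by
      ring
    rw [ge_iff_le]
    push_cast
    push_cast at hexp hq2
    rw [hexp]
    linarith

/-- Lemma 2.14 (Lemma 6 in Hefetz–Mikalacki–Stojaković): if `k > b` and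
`a − b − 1 ≥ 0`, then `f(k; a, b) ≥ k·a − 1 + (k(a−b−1)/b)·Σ_{j=2}^{⌈k/b⌉−1} 1/j`. -/
theorem stmt4 (a b k : ℕ) (ha : 1 ≤ a) (hb : 1 ≤ b) (hkb : b < k)
    (hab : b + 1 ≤ a) :
    (boxF a b k : ℝ) ≥ (k : ℝ) * a - 1 +
      ((k : ℝ) * ((a : ℝ) - b - 1) / b) *
        ∑ j ∈ Finset.Icc 2 ((⌈(k : ℚ) / (b : ℚ)⌉.toNat) - 1), (1 : ℝ) / j := by
  have h := boxF_key a b ha hb hab k hkb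
  have h' : ((boxF a b k : ℚ) : ℝ) ≥ (((k : ℚ) * a - 1 +
      ((k : ℚ) * ((a : ℚ) - b - 1) / b) *
        ∑ j ∈ Finset.Icc 2 ((⌈(k : ℚ) / (b : ℚ)⌉.toNat) - 1), (1 : ℚ) / j : ℚ) : ℝ) :=
    Rat.cast_le.mpr h
  push_cast at h'
  convert h' using 2
end

section
/- Let G = (V, E) be a finite simple graph and k ≥ 1 an integer. If G is a k-expander, i.e. |N_G(U)| ≥ 2|U| for every subset U ⊆ V with |U| ≤ k, then every connected component of G has at least 3k vertices. -/
open SimpleGraph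

/-- The external neighborhood `N_G(U) = {v ∉ U : v has a neighbor in U}`. -/
def extNbhd {V : Type*} (G : SimpleGraph V) (U : Set V) : Set V :=
  {v | v ∉ U ∧ ∃ u ∈ U, G.Adj u v}

/-- `G` is a `k`-expander: `|N_G(U)| ≥ 2|U|` for every `U ⊆ V` with `|U| ≤ k`. -/
def IsKExpander {V : Type*} (G : SimpleGraph V) (k : ℕ) : Prop :=
  ∀ U : Set V, U.ncard ≤ k → 2 * U.ncard ≤ (extNbhd G U).ncard

/-- Lemma 3.2 (Lemma 6.3.2 in Hefetz–Krivelevich–Stojaković–Szabó): every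
connected component of a `k`-expander has at least `3k` vertices. -/
theorem stmt5 {V : Type*} [Fintype V] (G : SimpleGraph V) (k : ℕ) (hk : 1 ≤ k)
    (hexp : IsKExpander G k) :
    ∀ c : G.ConnectedComponent, 3 * k ≤ c.supp.ncard := by
  intro c
  set S := c.supp with hS
  have hSne : S.Nonempty := by
    obtain ⟨v, rfl⟩ := c.exists_rep
    exact ⟨v, rfl⟩
  -- neighbors of vertices in S stay in S
  have hclosed : ∀ u v, u ∈ S → G.Adj u v → v ∈ S := by
    intro u v hu hadj
    have : G.connectedComponentMk u = c := hu
    have h2 : G.connectedComponentMk v = G.connectedComponentMk u :=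
      (ConnectedComponent.connectedComponentMk_eq_of_adj hadj.symm)
    show G.connectedComponentMk v = c
    rw [h2, this]
  -- first: k < S.ncard
  have hkS : k ≤ S.ncard := by
    by_contra h
    push_neg at h
    have hle : S.ncard ≤ k := le_of_lt h
    have := hexp S hle
    have hempty : extNbhd G S = ∅ := by
      ext v
      simp only [extNbhd, Set.mem_setOf_eq, Set.mem_empty_iff_false, iff_false, not_and]
      intro hvS ⟨u, hu, hadj⟩
      exact hvS (hclosed u v hu hadj)
    rw [hempty, Set.ncard_empty] at this
    have : S.ncard = 0 := by omega
    exact absurd (Set.ncard_eq_zero (Set.toFinite S) |>.mp this) hSne.ne_empty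
  obtain ⟨U, hUS, hUcard⟩ := Set.exists_subset_card_eq hkS
  have hexpU := hexp U (le_of_eq hUcard)
  have hsub : extNbhd G U ⊆ S \ U := by
    intro v hv
    obtain ⟨hvU, u, hu, hadj⟩ := hv
    exact ⟨hclosed u v (hUS hu) hadj, hvU⟩
  have h1 : (extNbhd G U).ncard ≤ (S \ U).ncard :=
    Set.ncard_le_ncard hsub (Set.toFinite _)
  have h2 : (S \ U).ncard = S.ncard - U.ncard :=
    Set.ncard_diff hUS (Set.toFinite U)
  have h3 : U.ncard ≤ S.ncard := Set.ncard_le_ncard hUS (Set.toFinite S)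
  omega
end

section
/- Let G = (V, E) be a finite connected simple graph that is not Hamiltonian, and let k ≥ 1 be an integer. If G is a k-expander, i.e. |N_G(U)| ≥ 2|U| for every subset U ⊆ V with |U| ≤ k, then G has at least (k+1)²/2 boosters, i.e. there are at least (k+1)²/2 unordered pairs {u, v} of distinct non-adjacent vertices such that adding the edge uv to G yields a graph that is Hamiltonian or whose longest path is strictly longer than a longest path of G. -/
open SimpleGraph

/-- The length of a longest path of `G`. -/
noncomputable def maxPathLength {V : Type*} (G : SimpleGraph V) : ℕ :=
  sSup {n : ℕ | ∃ (u v : V) (p : G.Walk u v), p.IsPath ∧ p.length = n}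

/-- A non-edge `{u, v}` of `G` is a booster if adding it creates a graph that is
Hamiltonian or has a strictly longer longest path than `G`. -/
def IsBooster {V : Type*} [Fintype V] [DecidableEq V] (G : SimpleGraph V) (u v : V) : Prop :=
  u ≠ v ∧ ¬ G.Adj u v ∧
    ((G ⊔ fromEdgeSet {s(u, v)}).IsHamiltonian ∨
      maxPathLength G < maxPathLength (G ⊔ fromEdgeSet {s(u, v)}))

namespace Stmt6Aux

open Set

variable {V : Type*}

/-! ### Walks from functions -/

/-- Build a walk from a function whose consecutive values are adjacent. -/
def fnWalk (G : SimpleGraph V) (f : ℕ → V) :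
    ∀ m : ℕ, (∀ i, i < m → G.Adj (f i) (f (i + 1))) → G.Walk (f 0) (f m)
  | 0, _ => Walk.nil
  | (m + 1), h =>
      (fnWalk G f m (fun i hi => h i (Nat.lt_succ_of_lt hi))).concat (h m (Nat.lt_succ_self m))

lemma fnWalk_support (G : SimpleGraph V) (f : ℕ → V) :
    ∀ (m : ℕ) (h : ∀ i, i < m → G.Adj (f i) (f (i + 1))),
      (fnWalk G f m h).support = (List.range (m + 1)).map f
  | 0, _ => rfl
  | (m + 1), h => by
      rw [fnWalk, Walk.support_concat, fnWalk_support G f m, List.range_succ (n := m + 1),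
        List.map_append]
      simp [List.concat_eq_append]

lemma fnWalk_edges (G : SimpleGraph V) (f : ℕ → V) :
    ∀ (m : ℕ) (h : ∀ i, i < m → G.Adj (f i) (f (i + 1))),
      (fnWalk G f m h).edges = (List.range m).map (fun i => s(f i, f (i + 1)))
  | 0, _ => rfl
  | (m + 1), h => by
      rw [fnWalk, Walk.edges_concat, fnWalk_edges G f m, List.range_succ, List.map_append]
      simp [List.concat_eq_append]

lemma fnWalk_length (G : SimpleGraph V) (f : ℕ → V) :
    ∀ (m : ℕ) (h : ∀ i, i < m → G.Adj (f i) (f (i + 1))),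
      (fnWalk G f m h).length = m
  | 0, _ => rfl
  | (m + 1), h => by rw [fnWalk, Walk.length_concat, fnWalk_length G f m]

lemma fnWalk_isPath (G : SimpleGraph V) (f : ℕ → V) (m : ℕ)
    (h : ∀ i, i < m → G.Adj (f i) (f (i + 1))) (hinj : Set.InjOn f (Set.Iic m)) :
    (fnWalk G f m h).IsPath := by
  rw [Walk.isPath_def, fnWalk_support]
  refine List.Nodup.map_on ?_ List.nodup_range
  intro x hx y hy hxy
  rw [List.mem_range] at hx hy
  exact hinj (by omega : x ≤ m) (by omega : y ≤ m) hxy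

/-- Any "function path" gives a lower bound for `maxPathLength`. -/
lemma le_maxPathLength [Fintype V] (G : SimpleGraph V) (f : ℕ → V) (m : ℕ)
    (h : ∀ i, i < m → G.Adj (f i) (f (i + 1))) (hinj : Set.InjOn f (Set.Iic m)) :
    m ≤ maxPathLength G := by
  have hb : BddAbove {n : ℕ | ∃ (u v : V) (p : G.Walk u v), p.IsPath ∧ p.length = n} := by
    refine ⟨Fintype.card V, ?_⟩
    rintro n ⟨u, v, p, hp, rfl⟩
    exact hp.length_lt.le
  have hmem : m ∈ {n : ℕ | ∃ (u v : V) (p : G.Walk u v), p.IsPath ∧ p.length = n} :=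
    ⟨f 0, f m, fnWalk G f m h, fnWalk_isPath G f m h hinj, fnWalk_length G f m h⟩
  exact le_csSup hb hmem

/-- There is a longest path, presented as a function. -/
lemma exists_max_fn [Fintype V] [Nonempty V] (G : SimpleGraph V) :
    ∃ f : ℕ → V, Set.InjOn f (Set.Iic (maxPathLength G)) ∧
      ∀ i, i < maxPathLength G → G.Adj (f i) (f (i + 1)) := by
  classical
  obtain ⟨u⟩ := ‹Nonempty V›
  have hb : BddAbove {n : ℕ | ∃ (u v : V) (p : G.Walk u v), p.IsPath ∧ p.length = n} := by
    refine ⟨Fintype.card V, ?_⟩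
    rintro n ⟨u, v, p, hp, rfl⟩
    exact hp.length_lt.le
  have hne : {n : ℕ | ∃ (u v : V) (p : G.Walk u v), p.IsPath ∧ p.length = n}.Nonempty :=
    ⟨0, u, u, Walk.nil, Walk.IsPath.nil, rfl⟩
  have hmem := Nat.sSup_mem hne hb
  obtain ⟨a, b, p, hp, hlen⟩ := hmem
  have hlen' : p.length = maxPathLength G := hlen
  have hLlen : p.support.length = maxPathLength G + 1 := by
    rw [Walk.length_support, hlen']
  have hnd : p.support.Nodup := hp.support_nodup
  refine ⟨fun i => p.support.getD i u, ?_, ?_⟩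
  · intro i hi j hj hij
    simp only [Set.mem_Iic] at hi hj
    have hi' : i < p.support.length := by omega
    have hj' : j < p.support.length := by omega
    have hij' : p.support.getD i u = p.support.getD j u := hij
    rw [List.getD_eq_getElem _ u hi', List.getD_eq_getElem _ u hj'] at hij'
    exact (hnd.getElem_inj_iff).1 hij'
  · intro i hi
    have h1 : i < p.support.length := by omega
    have h2 : i + 1 < p.support.length := by omega
    show G.Adj (p.support.getD i u) (p.support.getD (i+1) u)
    rw [List.getD_eq_getElem _ u h1, List.getD_eq_getElem _ u h2]
    have := List.isChain_iff_getElem.1 p.isChain_adj_support i (by omega)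
    simpa [List.get_eq_getElem] using this

/-! ### Rotations -/

/-- The index involution performing a rotation: reverses `0..j`, fixes the rest. -/
def rho (j : ℕ) : ℕ → ℕ := fun i => if i ≤ j then j - i else i

lemma rho_invol (j : ℕ) : Function.Involutive (rho j) := by
  intro i
  unfold rho
  by_cases h : i ≤ j
  · rw [if_pos h, if_pos (Nat.sub_le j i), Nat.sub_sub_self h]
  · rw [if_neg h, if_neg h]

lemma rho_mem_Iic {j l i : ℕ} (hj : j ≤ l) (hi : i ≤ l) : rho j i ≤ l := by
  unfold rho; split <;> omega

lemma rho_image_Iic {j l : ℕ} (hj : j ≤ l) : rho j '' Set.Iic l = Set.Iic l := by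
  apply Set.Subset.antisymm
  · rintro x ⟨i, hi, rfl⟩
    exact rho_mem_Iic hj hi
  · intro x hx
    exact ⟨rho j x, rho_mem_Iic hj hx, rho_invol j x⟩

/-- Paths derived from `f0` by Pósa rotations fixing the last vertex. -/
inductive Derived (G : SimpleGraph V) (l : ℕ) (f0 : ℕ → V) : (ℕ → V) → Prop
  | base : Derived G l f0 f0
  | rot {f : ℕ → V} (j : ℕ) (hj : j < l) (hadj : G.Adj (f 0) (f (j + 1)))
      (hf : Derived G l f0 f) : Derived G l f0 (f ∘ rho j)

section Posa

variable {G : SimpleGraph V} {l : ℕ} {f0 : ℕ → V}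

lemma Derived.injOn (hinj0 : Set.InjOn f0 (Set.Iic l)) {f : ℕ → V}
    (hf : Derived G l f0 f) : Set.InjOn f (Set.Iic l) := by
  induction hf with
  | base => exact hinj0
  | @rot f j hj hadj hf ih =>
      intro a ha b hb hab
      have ha' : rho j a ∈ Set.Iic l := rho_mem_Iic hj.le ha
      have hb' : rho j b ∈ Set.Iic l := rho_mem_Iic hj.le hb
      have := ih ha' hb' hab
      exact (rho_invol j).injective this

lemma Derived.last {f : ℕ → V} (hf : Derived G l f0 f) : f l = f0 l := by
  induction hf with
  | base => rfl
  | @rot f j hj hadj hf ih =>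
      show f (rho j l) = f0 l
      rw [show rho j l = l from if_neg (by omega)]
      exact ih

lemma Derived.chain (hch0 : ∀ i, i < l → G.Adj (f0 i) (f0 (i + 1))) {f : ℕ → V}
    (hf : Derived G l f0 f) : ∀ i, i < l → G.Adj (f i) (f (i + 1)) := by
  induction hf with
  | base => exact hch0
  | @rot f j hj hadj hf ih =>
      intro i hi
      show G.Adj (f (rho j i)) (f (rho j (i + 1)))
      rcases lt_trichotomy i j with h | h | h
      · have e1 : rho j i = (j - (i + 1)) + 1 := by unfold rho; split <;> omega
        have e2 : rho j (i + 1) = j - (i + 1) := by unfold rho; split <;> omega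
        rw [e1, e2]
        exact (ih (j - (i + 1)) (by omega)).symm
      · have e1 : rho j i = 0 := by unfold rho; split <;> omega
        have e2 : rho j (i + 1) = j + 1 := by unfold rho; split <;> omega
        rw [e1, e2]
        exact hadj
      · have e1 : rho j i = i := by unfold rho; split <;> omega
        have e2 : rho j (i + 1) = i + 1 := by unfold rho; split <;> omega
        rw [e1, e2]
        exact ih i hi

lemma Derived.image {f : ℕ → V} (hf : Derived G l f0 f) :
    f '' Set.Iic l = f0 '' Set.Iic l := by
  induction hf with
  | base => rfl
  | @rot f j hj hadj hf ih =>
      rw [Set.image_comp, rho_image_Iic hj.le, ih]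

/-- The set of endpoints obtainable by rotations. -/
def posaR (G : SimpleGraph V) (l : ℕ) (f0 : ℕ → V) : Set V :=
  {v | ∃ f : ℕ → V, Derived G l f0 f ∧ f 0 = v}

/-- Vertices adjacent (along `f0`) to a vertex of `posaR`. -/
def posaSide (G : SimpleGraph V) (l : ℕ) (f0 : ℕ → V) : Set V :=
  {v | ∃ t, t < l ∧ ((f0 t ∈ posaR G l f0 ∧ f0 (t + 1) = v) ∨
      (f0 (t + 1) ∈ posaR G l f0 ∧ f0 t = v))}

/-- Unordered adjacency along the base path `f0`. -/
def P0edge (l : ℕ) (f0 : ℕ → V) (a b : V) : Prop :=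
  ∃ t, t < l ∧ ((f0 t = a ∧ f0 (t + 1) = b) ∨ (f0 t = b ∧ f0 (t + 1) = a))

lemma P0edge.symm {l : ℕ} {f0 : ℕ → V} {a b : V} (h : P0edge l f0 a b) : P0edge l f0 b a := by
  obtain ⟨t, ht, h⟩ := h
  exact ⟨t, ht, h.symm⟩

lemma head_mem_posaR {f : ℕ → V} (hf : Derived G l f0 f) : f 0 ∈ posaR G l f0 :=
  ⟨f, hf, rfl⟩

lemma mem_side_of_P0edge {v w : V} (hw : w ∈ posaR G l f0) (h : P0edge l f0 w v) :
    v ∈ posaSide G l f0 := by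
  obtain ⟨t, ht, h | h⟩ := h
  · exact ⟨t, ht, Or.inl ⟨h.1 ▸ hw, h.2⟩⟩
  · exact ⟨t, ht, Or.inr ⟨h.2 ▸ hw, h.1⟩⟩

/-- The key invariant: any edge of a derived path, one of whose endpoints is neither a
rotation endpoint nor adjacent along `f0` to one, is an edge of the base path. -/
lemma Derived.strong {f : ℕ → V} (hf : Derived G l f0 f) :
    ∀ i, i < l → ∀ v, (v = f i ∨ v = f (i + 1)) →
      v ∉ posaR G l f0 ∪ posaSide G l f0 → P0edge l f0 (f i) (f (i + 1)):= by
  induction hf with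
  | base =>
      intro i hi v _ _
      exact ⟨i, hi, Or.inl ⟨rfl, rfl⟩⟩
  | @rot f j hj hadj hf ih =>
      intro i hi v hv hvD
      have hfun : ∀ n : ℕ, (f ∘ rho j) n = f (rho j n) := fun _ => rfl
      have hhead : f j ∈ posaR G l f0 := by
        have := head_mem_posaR (Derived.rot j hj hadj hf)
        rwa [show (f ∘ rho j) 0 = f j by
          simp [rho, Nat.zero_le]] at this
      rcases lt_trichotomy i j with h | h | h
      · -- a reversed edge of `f`
        have e1 : rho j i = (j - (i + 1)) + 1 := by unfold rho; split <;> omega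
        have e2 : rho j (i + 1) = j - (i + 1) := by unfold rho; split <;> omega
        rw [hfun, hfun, e1, e2] at hv ⊢
        exact (ih (j - (i + 1)) (by omega) v hv.symm hvD).symm
      · -- the new edge {f 0, f (j+1)}
        subst h
        have e1 : rho i i = 0 := by unfold rho; split <;> omega
        have e2 : rho i (i + 1) = i + 1 := by unfold rho; split <;> omega
        rw [hfun, hfun, e1, e2] at hv ⊢
        exfalso
        rcases hv with rfl | rfl
        · exact hvD (Or.inl (head_mem_posaR hf))
        · -- v = f (i+1); show it must be in the side set
          refine hvD (Or.inr ?_)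
          have hP : P0edge l f0 (f i) (f (i + 1)) :=
            ih i hi (f (i + 1)) (Or.inr rfl) hvD
          exact mem_side_of_P0edge hhead (by
            obtain ⟨t, ht, h⟩ := hP
            exact ⟨t, ht, h⟩)
      · have e1 : rho j i = i := by unfold rho; split <;> omega
        have e2 : rho j (i + 1) = i + 1 := by unfold rho; split <;> omega
        rw [hfun, hfun, e1, e2] at hv ⊢
        exact ih i hi v hv hvD

end Posa

section PosaCard

variable [Fintype V] {G : SimpleGraph V} {k l : ℕ} {f0 : ℕ → V}

/-- If a path of length `l` can't be extended, every neighbour of the head of a derived path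
lies on that path. -/
lemma no_extend
    (hmax : ∀ g : ℕ → V, Set.InjOn g (Set.Iic (l + 1)) →
      (∀ i, i < l + 1 → G.Adj (g i) (g (i + 1))) → False)
    {f : ℕ → V} (hinj : Set.InjOn f (Set.Iic l))
    (hch : ∀ i, i < l → G.Adj (f i) (f (i + 1)))
    {v : V} (hv : G.Adj (f 0) v) : v ∈ f '' Set.Iic l := by
  by_contra hvim
  set g : ℕ → V := fun i => if i = 0 then v else f (i - 1) with hg
  refine hmax g ?_ ?_
  · intro a ha b hb hab
    simp only [Set.mem_Iic] at ha hb
    rcases Nat.eq_zero_or_pos a with rfl | hapos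
    · rcases Nat.eq_zero_or_pos b with rfl | hbpos
      · rfl
      · exfalso
        apply hvim
        have : g b = f (b - 1) := by simp [hg, Nat.pos_iff_ne_zero.1 hbpos]
        rw [hg] at hab
        simp only [if_pos rfl, if_neg (Nat.pos_iff_ne_zero.1 hbpos)] at hab
        exact ⟨b - 1, by simp only [Set.mem_Iic]; omega, hab.symm⟩
    · rcases Nat.eq_zero_or_pos b with rfl | hbpos
      · exfalso
        apply hvim
        rw [hg] at hab
        simp only [if_pos rfl, if_neg (Nat.pos_iff_ne_zero.1 hapos)] at hab
        exact ⟨a - 1, by simp only [Set.mem_Iic]; omega, hab⟩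
      · rw [hg] at hab
        simp only [if_neg (Nat.pos_iff_ne_zero.1 hapos),
          if_neg (Nat.pos_iff_ne_zero.1 hbpos)] at hab
        have := hinj (by simp only [Set.mem_Iic]; omega : a - 1 ∈ Set.Iic l)
          (by simp only [Set.mem_Iic]; omega : b - 1 ∈ Set.Iic l) hab
        omega
  · intro i hi
    rcases Nat.eq_zero_or_pos i with rfl | hipos
    · show G.Adj (g 0) (g 1)
      rw [hg]
      simpa using hv.symm
    · have e1 : g i = f (i - 1) := by simp [hg, Nat.pos_iff_ne_zero.1 hipos]
      have e2 : g (i + 1) = f i := by simp [hg]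
      rw [e1, e2]
      have : G.Adj (f (i - 1)) (f (i - 1 + 1)) := hch (i - 1) (by omega)
      rwa [Nat.sub_add_cancel hipos] at this

lemma extNbhd_posaR_subset
    (hinj0 : Set.InjOn f0 (Set.Iic l))
    (hch0 : ∀ i, i < l → G.Adj (f0 i) (f0 (i + 1)))
    (hmax : ∀ g : ℕ → V, Set.InjOn g (Set.Iic (l + 1)) →
      (∀ i, i < l + 1 → G.Adj (g i) (g (i + 1))) → False) :
    extNbhd G (posaR G l f0) ⊆ posaSide G l f0 \ posaR G l f0 := by
  rintro v ⟨hvR, u, hu, huv⟩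
  refine ⟨?_, hvR⟩
  by_contra hvS
  have hvD : v ∉ posaR G l f0 ∪ posaSide G l f0 := by
    rintro (h | h)
    exacts [hvR h, hvS h]
  obtain ⟨f, hf, rfl⟩ := hu
  have hinj := hf.injOn hinj0
  have hch := hf.chain hch0
  have hvim : v ∈ f '' Set.Iic l := no_extend hmax hinj hch huv
  obtain ⟨p, hp, rfl⟩ := hvim
  simp only [Set.mem_Iic] at hp
  have hp0 : p ≠ 0 := by
    rintro rfl
    exact huv.ne rfl
  obtain ⟨j, rfl⟩ : ∃ j, p = j + 1 := ⟨p - 1, by omega⟩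
  have hjl : j < l := by omega
  -- rotating at pivot j+1 puts f j into posaR
  have hfj : f j ∈ posaR G l f0 := by
    have h' := head_mem_posaR (Derived.rot j hjl huv hf)
    rwa [show (f ∘ rho j) 0 = f j by simp [rho, Nat.zero_le]] at h'
  have hP : P0edge l f0 (f j) (f (j + 1)) :=
    hf.strong j hjl (f (j + 1)) (Or.inr rfl) hvD
  exact hvS (mem_side_of_P0edge hfj hP)

/-- Pósa's rotation lemma: enough rotation endpoints. -/
theorem posa_core (hexp : IsKExpander G k)
    (hinj0 : Set.InjOn f0 (Set.Iic l))
    (hch0 : ∀ i, i < l → G.Adj (f0 i) (f0 (i + 1)))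
    (hmax : ∀ g : ℕ → V, Set.InjOn g (Set.Iic (l + 1)) →
      (∀ i, i < l + 1 → G.Adj (g i) (g (i + 1))) → False) :
    ∃ R : Set V, k + 1 ≤ R.ncard ∧ ∀ y ∈ R, ∃ f : ℕ → V,
      f 0 = y ∧ f l = f0 l ∧ Set.InjOn f (Set.Iic l) ∧
        ∀ i, i < l → G.Adj (f i) (f (i + 1)) := by
  classical
  refine ⟨posaR G l f0, ?_, ?_⟩
  · by_contra hlt
    push_neg at hlt
    have hRk : (posaR G l f0).ncard ≤ k := by omega
    have hexp' := hexp _ hRk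
    have h1 : 1 ≤ (posaR G l f0).ncard := by
      have : (posaR G l f0).Nonempty := ⟨f0 0, head_mem_posaR Derived.base⟩
      have := this.ncard_pos (Set.toFinite _)
      omega
    -- bound the side sets
    set R := posaR G l f0 with hR
    set Tp : Set ℕ := {t | t < l ∧ f0 t ∈ R} with hTp
    set Tm : Set ℕ := {t | t < l ∧ f0 (t + 1) ∈ R} with hTm
    have hTpfin : Tp.Finite := (Set.finite_Iio l).subset (fun t ht => ht.1)
    have hTmfin : Tm.Finite := (Set.finite_Iio l).subset (fun t ht => ht.1)
    have hplus : {v | ∃ t, t < l ∧ f0 t ∈ R ∧ f0 (t + 1) = v} = (fun t => f0 (t + 1)) '' Tp := by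
      ext v
      constructor
      · rintro ⟨t, h1, h2, rfl⟩; exact ⟨t, ⟨h1, h2⟩, rfl⟩
      · rintro ⟨t, ⟨h1, h2⟩, rfl⟩; exact ⟨t, h1, h2, rfl⟩
    have hminus : {v | ∃ t, t < l ∧ f0 (t + 1) ∈ R ∧ f0 t = v} = f0 '' Tm := by
      ext v
      constructor
      · rintro ⟨t, h1, h2, rfl⟩; exact ⟨t, ⟨h1, h2⟩, rfl⟩
      · rintro ⟨t, ⟨h1, h2⟩, rfl⟩; exact ⟨t, h1, h2, rfl⟩
    have hTpR : Tp.ncard ≤ R.ncard := by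
      refine Set.ncard_le_ncard_of_injOn f0 ?_ ?_ (Set.toFinite _)
      · rintro t ⟨h1, h2⟩; exact h2
      · rintro a ⟨ha1, _⟩ b ⟨hb1, _⟩ hab
        exact hinj0 (by simp only [Set.mem_Iic]; omega) (by
          simp only [Set.mem_Iic]; omega) hab
    have hTmR : Tm.ncard ≤ R.ncard - 1 := by
      have : Tm.ncard ≤ (R \ {f0 0}).ncard := by
        refine Set.ncard_le_ncard_of_injOn (fun t => f0 (t + 1)) ?_ ?_ (Set.toFinite _)
        · rintro t ⟨h1, h2⟩
          refine ⟨h2, ?_⟩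
          simp only [Set.mem_singleton_iff]
          intro heq
          have := hinj0 (by simp only [Set.mem_Iic]; omega : t + 1 ∈ Set.Iic l)
            (by simp only [Set.mem_Iic]; omega : (0 : ℕ) ∈ Set.Iic l) heq
          omega
        · rintro a ⟨ha1, _⟩ b ⟨hb1, _⟩ hab
          have := hinj0 (by simp only [Set.mem_Iic]; omega : a + 1 ∈ Set.Iic l)
            (by simp only [Set.mem_Iic]; omega : b + 1 ∈ Set.Iic l) hab
          omega
      have h0R : f0 0 ∈ R := head_mem_posaR Derived.base
      rwa [Set.ncard_diff_singleton_of_mem h0R] at this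
    have hside : (posaSide G l f0).ncard ≤ 2 * R.ncard - 1 := by
      have hsub : posaSide G l f0 ⊆
          {v | ∃ t, t < l ∧ f0 t ∈ R ∧ f0 (t + 1) = v} ∪
          {v | ∃ t, t < l ∧ f0 (t + 1) ∈ R ∧ f0 t = v} := by
        rintro v ⟨t, ht, h | h⟩
        · exact Or.inl ⟨t, ht, h.1, h.2⟩
        · exact Or.inr ⟨t, ht, h.1, h.2⟩
      calc (posaSide G l f0).ncard ≤ _ := Set.ncard_le_ncard hsub (Set.toFinite _)
        _ ≤ {v | ∃ t, t < l ∧ f0 t ∈ R ∧ f0 (t + 1) = v}.ncard +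
            {v | ∃ t, t < l ∧ f0 (t + 1) ∈ R ∧ f0 t = v}.ncard :=
          Set.ncard_union_le _ _
        _ ≤ Tp.ncard + Tm.ncard := by
            rw [hplus, hminus]
            exact Nat.add_le_add (Set.ncard_image_le hTpfin)
              (Set.ncard_image_le hTmfin)
        _ ≤ R.ncard + (R.ncard - 1) := Nat.add_le_add hTpR hTmR
        _ ≤ 2 * R.ncard - 1 := by omega
    have hnb : (extNbhd G R).ncard ≤ 2 * R.ncard - 1 := by
      calc (extNbhd G R).ncard
          ≤ (posaSide G l f0 \ posaR G l f0).ncard :=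
            Set.ncard_le_ncard (extNbhd_posaR_subset hinj0 hch0 hmax) (Set.toFinite _)
        _ ≤ (posaSide G l f0).ncard := Set.ncard_le_ncard Set.diff_subset (Set.toFinite _)
        _ ≤ 2 * R.ncard - 1 := hside
    omega
  · rintro y ⟨f, hf, rfl⟩
    exact ⟨f, rfl, hf.last, hf.injOn hinj0, hf.chain hch0⟩

end PosaCard

/-! ### The cycle lemma -/

lemma exists_crossing_edge {H : SimpleGraph V} (S : Set V) :
    ∀ {x y : V}, H.Walk x y → x ∉ S → y ∈ S → ∃ a b, a ∉ S ∧ b ∈ S ∧ H.Adj a b := by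
  intro x y w
  induction w with
  | nil => intro hx hy; exact absurd hy hx
  | @cons u v w h q ih =>
      intro hx hy
      by_cases hv : v ∈ S
      · exact ⟨u, v, hx, hv, h⟩
      · exact ih hv hy

lemma cycle_lemma [Fintype V] [DecidableEq V] {H : SimpleGraph V} (hconn : H.Connected)
    {l : ℕ} (hl : 2 ≤ l) (h : ℕ → V) (hinj : Set.InjOn h (Set.Iic l))
    (hch : ∀ i, i < l → H.Adj (h i) (h (i + 1))) (hcl : H.Adj (h l) (h 0)) :
    H.IsHamiltonian ∨ ∃ g : ℕ → V, Set.InjOn g (Set.Iic (l + 1)) ∧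
      ∀ i, i < l + 1 → H.Adj (g i) (g (i + 1)) := by
  classical
  by_cases himg : h '' Set.Iic l = Set.univ
  · -- Hamiltonian case
    left
    intro _hcard
    set p := fnWalk H h l hch with hp
    have hppath : p.IsPath := fnWalk_isPath H h l hch hinj
    set c : H.Walk (h l) (h l) := Walk.cons hcl p with hc
    have hedge : s(h l, h 0) ∉ p.edges := by
      rw [hp, fnWalk_edges]
      intro hmem
      obtain ⟨i, hi, heq⟩ := List.mem_map.1 hmem
      rw [List.mem_range] at hi
      rw [Sym2.eq_iff] at heq
      rcases heq with ⟨h1, h2⟩ | ⟨h1, h2⟩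
      · have : i = l := hinj (by simp only [Set.mem_Iic]; omega)
          (by simp only [Set.mem_Iic]; omega) h1
        omega
      · have hi1 : i + 1 = l := hinj (by simp only [Set.mem_Iic]; omega)
          (by simp only [Set.mem_Iic]; omega) h2
        have hi0 : i = 0 := hinj (by simp only [Set.mem_Iic]; omega)
          (by simp only [Set.mem_Iic]; omega) h1
        omega
    have hcyc : c.IsCycle := (Walk.cons_isCycle_iff p hcl).2 ⟨hppath, hedge⟩
    refine ⟨h l, c, ?_⟩
    rw [SimpleGraph.Walk.isHamiltonianCycle_iff_isCycle_and_support_count_tail_eq_one]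
    refine ⟨hcyc, ?_⟩
    intro a
    have hsupp : c.support = h l :: p.support := Walk.support_cons hcl p
    rw [hsupp]
    simp only [List.tail_cons]
    have hnd : p.support.Nodup := hppath.support_nodup
    refine List.count_eq_one_of_mem hnd ?_
    have : a ∈ h '' Set.Iic l := by rw [himg]; trivial
    obtain ⟨i, hi, rfl⟩ := this
    simp only [Set.mem_Iic] at hi
    rw [hp, fnWalk_support]
    exact List.mem_map.2 ⟨i, List.mem_range.2 (by omega), rfl⟩
  · -- extension case
    right
    have hex : ∃ x, x ∉ h '' Set.Iic l := by
      by_contra hno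
      push_neg at hno
      exact himg (Set.eq_univ_of_forall hno)
    obtain ⟨x, hx⟩ := hex
    have h0mem : h 0 ∈ h '' Set.Iic l := ⟨0, by simp, rfl⟩
    obtain ⟨a, b, haS, hbS, hab⟩ :=
      exists_crossing_edge (h '' Set.Iic l) ((hconn x (h 0)).some) hx h0mem
    obtain ⟨p0, hp0, rfl⟩ := hbS
    simp only [Set.mem_Iic] at hp0
    set n := l + 1 with hn
    have hnpos : 0 < n := by omega
    set g : ℕ → V := fun i => if i = 0 then a else h ((p0 + (i - 1)) % n) with hg
    have hgmem : ∀ i, i ≠ 0 → g i ∈ h '' Set.Iic l := by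
      intro i hi
      refine ⟨(p0 + (i - 1)) % n, ?_, by simp [hg, hi]⟩
      simp only [Set.mem_Iic]
      have := Nat.mod_lt (p0 + (i - 1)) hnpos
      omega
    refine ⟨g, ?_, ?_⟩
    · intro i hi j hj hij
      simp only [Set.mem_Iic] at hi hj
      rcases Nat.eq_zero_or_pos i with rfl | hipos
      · rcases Nat.eq_zero_or_pos j with rfl | hjpos
        · rfl
        · exfalso
          apply haS
          rw [show a = g 0 by simp [hg], hij]
          exact hgmem j (by omega)
      · rcases Nat.eq_zero_or_pos j with rfl | hjpos
        · exfalso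
          apply haS
          rw [show a = g 0 by simp [hg], ← hij]
          exact hgmem i (by omega)
        · have e1 : g i = h ((p0 + (i - 1)) % n) := by simp [hg, Nat.pos_iff_ne_zero.1 hipos]
          have e2 : g j = h ((p0 + (j - 1)) % n) := by simp [hg, Nat.pos_iff_ne_zero.1 hjpos]
          rw [e1, e2] at hij
          have hmod : (p0 + (i - 1)) % n = (p0 + (j - 1)) % n := by
            refine hinj ?_ ?_ hij
            · simp only [Set.mem_Iic]
              have := Nat.mod_lt (p0 + (i - 1)) hnpos
              omega
            · simp only [Set.mem_Iic]
              have := Nat.mod_lt (p0 + (j - 1)) hnpos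
              omega
          have h1 : (i - 1) % n = (j - 1) % n := by
            have : (p0 + (i - 1)) ≡ p0 + (j - 1) [MOD n] := hmod
            have h2 := Nat.ModEq.add_left_cancel' p0 this
            exact h2
          rw [Nat.mod_eq_of_lt (by omega), Nat.mod_eq_of_lt (by omega)] at h1
          omega
    · intro i hi
      rcases Nat.eq_zero_or_pos i with rfl | hipos
      · have e1 : g 0 = a := by simp [hg]
        have e2 : g 1 = h p0 := by
          simp only [hg]
          rw [if_neg one_ne_zero]
          rw [Nat.mod_eq_of_lt (show p0 + (1 - 1) < n by omega)]
          rfl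
        rw [e1, e2]
        exact hab
      · have e1 : g i = h ((p0 + (i - 1)) % n) := by simp [hg, Nat.pos_iff_ne_zero.1 hipos]
        have e2 : g (i + 1) = h ((p0 + i) % n) := by
          simp only [hg]
          rw [if_neg (by omega : ¬ i + 1 = 0)]
          rfl
        rw [e1, e2]
        have hql : (p0 + (i - 1)) % n ≤ l := by
          have := Nat.mod_lt (p0 + (i - 1)) hnpos
          omega
        have hstep : (p0 + i) % n = ((p0 + (i - 1)) % n + 1) % n := by
          rw [show p0 + i = (p0 + (i - 1)) + 1 by omega, Nat.add_mod,
            Nat.mod_eq_of_lt (show 1 < n by omega)]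
        rw [hstep]
        rcases eq_or_lt_of_le hql with heq | hlt
        · rw [heq, show l + 1 = n from rfl, Nat.mod_self]
          exact hcl
        · rw [Nat.mod_eq_of_lt (show (p0 + (i - 1)) % n + 1 < n by omega)]
          exact hch _ hlt

/-! ### Counting -/

lemma count_final [Fintype V] [DecidableEq V] {P : V → V → Prop} {k : ℕ} (R : Set V)
    (hRc : k + 1 ≤ R.ncard)
    (hB : ∀ y ∈ R, ∃ B : Set V, k + 1 ≤ B.ncard ∧ ∀ z ∈ B, P y z) :
    (k + 1) ^ 2 ≤ 2 * {e : Sym2 V | ∃ u v : V, e = s(u, v) ∧ P u v}.ncard := by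
  classical
  have hchoice : ∀ y : V, ∃ B : Finset V, y ∈ R → (k + 1 ≤ B.card ∧ ∀ z ∈ B, P y z) := by
    intro y
    by_cases hy : y ∈ R
    · obtain ⟨B, hB1, hB2⟩ := hB y hy
      refine ⟨(Set.toFinite B).toFinset, fun _ => ⟨?_, ?_⟩⟩
      · rwa [← Set.ncard_eq_toFinset_card B (Set.toFinite B)]
      · intro z hz
        exact hB2 z ((Set.Finite.mem_toFinset _).1 hz)
    · exact ⟨∅, fun h => absurd h hy⟩
  choose Bf hBf using hchoice
  set Rf : Finset V := (Set.toFinite R).toFinset with hRf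
  have hRfcard : Rf.card = R.ncard := (Set.ncard_eq_toFinset_card R (Set.toFinite R)).symm
  set T : Finset (V × V) := Rf.biUnion (fun y => (Bf y).image (fun z => (y, z))) with hT
  have hTcard : (k + 1) * (k + 1) ≤ T.card := by
    have hdisj : ∀ x ∈ Rf, ∀ y ∈ Rf, x ≠ y →
        Disjoint ((Bf x).image (fun z => (x, z))) ((Bf y).image (fun z => (y, z))) := by
      intro x _ y _ hxy
      rw [Finset.disjoint_left]
      rintro p hp hq
      obtain ⟨z1, _, rfl⟩ := Finset.mem_image.1 hp
      obtain ⟨z2, _, heq⟩ := Finset.mem_image.1 hq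
      exact hxy (congrArg Prod.fst heq).symm
    rw [hT, Finset.card_biUnion hdisj]
    have hterm : ∀ y ∈ Rf, k + 1 ≤ ((Bf y).image (fun z => (y, z))).card := by
      intro y hy
      have hyR : y ∈ R := (Set.Finite.mem_toFinset _).1 hy
      rw [Finset.card_image_of_injective _ (fun a b hab => congrArg Prod.snd hab)]
      exact (hBf y hyR).1
    calc (k + 1) * (k + 1) ≤ Rf.card * (k + 1) := by
          have : k + 1 ≤ Rf.card := by omega
          exact Nat.mul_le_mul_right _ this
      _ = Rf.card • (k + 1) := (smul_eq_mul ..).symm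
      _ ≤ ∑ y ∈ Rf, ((Bf y).image (fun z => (y, z))).card :=
          Finset.card_nsmul_le_sum _ _ _ hterm
  set F : V × V → Sym2 V := fun p => s(p.1, p.2) with hF
  have himg : T.card ≤ 2 * (T.image F).card := by
    refine Finset.card_le_mul_card_image T 2 ?_
    intro e he
    obtain ⟨⟨y, z⟩, _, rfl⟩ := Finset.mem_image.1 he
    have hsub : {x ∈ T | F x = F (y, z)} ⊆ insert (y, z) {(z, y)} := by
      rintro ⟨p, q⟩ hpq
      rw [Finset.mem_filter] at hpq
      have := hpq.2
      rw [hF] at this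
      simp only at this
      rw [Sym2.eq_iff] at this
      rcases this with ⟨rfl, rfl⟩ | ⟨rfl, rfl⟩
      · exact Finset.mem_insert_self _ _
      · exact Finset.mem_insert_of_mem (Finset.mem_singleton_self _)
    calc {x ∈ T | F x = F (y, z)}.card ≤ (insert (y, z) ({(z, y)} : Finset (V × V))).card :=
          Finset.card_le_card hsub
      _ ≤ ({(z, y)} : Finset (V × V)).card + 1 := Finset.card_insert_le _ _
      _ ≤ 2 := by simp
  have hsubset : (↑(T.image F) : Set (Sym2 V)) ⊆
      {e : Sym2 V | ∃ u v : V, e = s(u, v) ∧ P u v} := by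
    intro e he
    rw [Finset.mem_coe, Finset.mem_image] at he
    obtain ⟨⟨y, z⟩, hyzT, rfl⟩ := he
    rw [hT, Finset.mem_biUnion] at hyzT
    obtain ⟨y', hy', hmem⟩ := hyzT
    obtain ⟨z', hz', heq⟩ := Finset.mem_image.1 hmem
    obtain ⟨rfl, rfl⟩ : y' = y ∧ z' = z := Prod.mk.injEq .. ▸ Prod.ext_iff.1 heq
    have hyR : y' ∈ R := (Set.Finite.mem_toFinset _).1 hy'
    exact ⟨y', z', rfl, (hBf y' hyR).2 z' hz'⟩
  have hfinal : (T.image F).card ≤ {e : Sym2 V | ∃ u v : V, e = s(u, v) ∧ P u v}.ncard := by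
    rw [← Set.ncard_coe_finset]
    exact Set.ncard_le_ncard hsubset (Set.toFinite _)
  calc (k + 1) ^ 2 = (k + 1) * (k + 1) := sq (k + 1)
    _ ≤ T.card := hTcard
    _ ≤ 2 * (T.image F).card := himg
    _ ≤ 2 * {e : Sym2 V | ∃ u v : V, e = s(u, v) ∧ P u v}.ncard := by omega

end Stmt6Aux

/-- Lemma 3.4 (Corollary 6.3.6 in Hefetz–Krivelevich–Stojaković–Szabó): a connected
non-Hamiltonian `k`-expander has at least `(k+1)²/2` boosters (counted as
unordered pairs). -/
theorem stmt6 {V : Type*} [Fintype V] [DecidableEq V] (G : SimpleGraph V) (k : ℕ) (hk : 1 ≤ k)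
    (hconn : G.Connected) (hham : ¬ G.IsHamiltonian) (hexp : IsKExpander G k) :
    (((k : ℝ) + 1) ^ 2) / 2 ≤
      {e : Sym2 V | ∃ u v : V, e = s(u, v) ∧ IsBooster G u v}.ncard := by
  classical
  haveI hVne : Nonempty V := hconn.nonempty
  obtain ⟨u0⟩ := hVne
  haveI : Nonempty V := ⟨u0⟩
  set l := maxPathLength G with hldef
  -- minimum degree at least 2
  have hdeg : ∀ u : V, ∃ a b : V, G.Adj u a ∧ G.Adj u b ∧ a ≠ b := by
    intro u
    have h1 := hexp {u} (by rw [Set.ncard_singleton]; exact hk)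
    rw [Set.ncard_singleton, mul_one] at h1
    have h2 : 1 < (extNbhd G {u}).ncard := by omega
    rw [Set.one_lt_ncard (Set.toFinite _)] at h2
    obtain ⟨a, ha, b, hb, hab⟩ := h2
    obtain ⟨-, u1, hu1, hua⟩ := ha
    obtain ⟨-, u2, hu2, hub⟩ := hb
    rw [Set.mem_singleton_iff] at hu1 hu2
    subst hu1; subst hu2
    exact ⟨a, b, hua, hub, hab⟩
  -- the longest path has length at least 2
  have hl2 : 2 ≤ l := by
    obtain ⟨a, b, hua, hub, hab⟩ := hdeg u0
    have hanu : a ≠ u0 := hua.ne'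
    have hbnu : u0 ≠ b := hub.ne
    refine Stmt6Aux.le_maxPathLength G
      (fun i => if i = 0 then a else if i = 1 then u0 else b) 2 ?_ ?_
    · intro i hi
      interval_cases i
      · show G.Adj a u0
        exact hua.symm
      · show G.Adj u0 b
        exact hub
    · intro i hi j hj hij
      simp only [Set.mem_Iic] at hi hj
      interval_cases i <;> interval_cases j <;> first
        | rfl
        | exact absurd (show a = u0 from hij) hanu
        | exact absurd (show a = b from hij) hab
        | exact absurd (show u0 = a from hij) hanu.symm
        | exact absurd (show u0 = b from hij) hbnu
        | exact absurd (show b = a from hij) hab.symm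
        | exact absurd (show b = u0 from hij) hbnu.symm
  -- no path is longer than l
  have hmaxG : ∀ g : ℕ → V, Set.InjOn g (Set.Iic (l + 1)) →
      (∀ i, i < l + 1 → G.Adj (g i) (g (i + 1))) → False := by
    intro g hg hc
    have := Stmt6Aux.le_maxPathLength G g (l + 1) hc hg
    omega
  obtain ⟨f0, hinj0, hch0⟩ := Stmt6Aux.exists_max_fn G
  obtain ⟨R, hRcard, hR⟩ := Stmt6Aux.posa_core hexp hinj0 hch0 hmaxG
  have key : ∀ y ∈ R, ∃ B : Set V, k + 1 ≤ B.ncard ∧ ∀ z ∈ B, IsBooster G y z := by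
    intro y hy
    obtain ⟨f, hf0, hfl, hfinj, hfch⟩ := hR y hy
    set g : ℕ → V := fun i => f (l - i) with hgdef
    have hginj : Set.InjOn g (Set.Iic l) := by
      intro i hi j hj hij
      simp only [Set.mem_Iic] at hi hj
      have hij' : f (l - i) = f (l - j) := hij
      have := hfinj (by simp only [Set.mem_Iic]; omega : l - i ∈ Set.Iic l)
        (by simp only [Set.mem_Iic]; omega : l - j ∈ Set.Iic l) hij'
      omega
    have hgch : ∀ i, i < l → G.Adj (g i) (g (i + 1)) := by
      intro i hi
      show G.Adj (f (l - i)) (f (l - (i + 1)))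
      rw [show l - i = (l - (i + 1)) + 1 by omega]
      exact (hfch (l - (i + 1)) (by omega)).symm
    obtain ⟨B, hBcard, hBmem⟩ := Stmt6Aux.posa_core hexp hginj hgch hmaxG
    refine ⟨B, hBcard, ?_⟩
    intro z hz
    obtain ⟨h, hh0, hhl, hhinj, hhch⟩ := hBmem z hz
    have hy' : h l = y := by
      rw [hhl]
      show f (l - l) = y
      rw [Nat.sub_self]
      exact hf0
    have hne : z ≠ y := by
      rw [← hh0, ← hy']
      intro heq
      have := hhinj (by simp only [Set.mem_Iic]; omega : (0 : ℕ) ∈ Set.Iic l)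
        (Set.mem_Iic.2 le_rfl) heq
      omega
    have hnadj : ¬ G.Adj y z := by
      intro hadj
      have hcl : G.Adj (h l) (h 0) := by rw [hy', hh0]; exact hadj
      rcases Stmt6Aux.cycle_lemma hconn hl2 h hhinj hhch hcl with hH | ⟨g', hg'1, hg'2⟩
      · exact hham hH
      · exact hmaxG g' hg'1 hg'2
    set H : SimpleGraph V := G ⊔ fromEdgeSet {s(y, z)} with hHdef
    have hGH : G ≤ H := le_sup_left
    have hHconn : H.Connected := hconn.mono hGH
    have hHadj : H.Adj (h l) (h 0) := by
      rw [hy', hh0, hHdef, sup_adj]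
      right
      rw [fromEdgeSet_adj]
      exact ⟨Set.mem_singleton _, hne.symm⟩
    have hHch : ∀ i, i < l → H.Adj (h i) (h (i + 1)) := fun i hi => hGH (hhch i hi)
    rcases Stmt6Aux.cycle_lemma hHconn hl2 h hhinj hHch hHadj with hH | ⟨g', hg'1, hg'2⟩
    · exact ⟨hne.symm, hnadj, Or.inl hH⟩
    · refine ⟨hne.symm, hnadj, Or.inr ?_⟩
      have h1 := Stmt6Aux.le_maxPathLength H g' (l + 1) hg'2 hg'1
      show maxPathLength G < maxPathLength H
      omega
  have hcount := Stmt6Aux.count_final R hRcard key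
  rw [div_le_iff₀ (by norm_num : (0 : ℝ) < 2)]
  have hcast := (Nat.cast_le (α := ℝ)).2 hcount
  push_cast at hcast ⊢
  linarith
end

section
/- Let a, k : ℕ → ℕ with a(n) ≥ 1 and k(n) ≥ 1 for all n, such that a(n) = o(√(n/ln n)) and k(n) = o(ln n) as n → ∞, and let ε ∈ (0,1). Then for all sufficiently large n the denominator ln n + a(n) + 2k(n) − 1 + 2·ln k(n) + ln ln n is positive and (1−ε)·a(n)·n/(a(n) + ln n) < a(n)·( n − k(n) + ((a(n)−1)/2)·ln( n/(a(n)²·ln n) ) − n/(a(n)·ln n) ) / ( ln n + a(n) + 2k(n) − 1 + 2·ln k(n) + ln ln n ). -/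
open Filter Real

set_option maxHeartbeats 1000000 in
/-- Contradiction step (Case `s > r`) in the proof of Theorem 2.11(i). -/
theorem stmt7 (a k : ℕ → ℕ) (ha1 : ∀ n, 1 ≤ a n) (hk1 : ∀ n, 1 ≤ k n)
    (ha : (fun n : ℕ => (a n : ℝ)) =o[atTop] fun n : ℕ => Real.sqrt (n / Real.log n))
    (hk : (fun n : ℕ => (k n : ℝ)) =o[atTop] fun n : ℕ => Real.log n)
    (ε : ℝ) (hε : 0 < ε) (hε1 : ε < 1) :
    ∀ᶠ n : ℕ in atTop,
      0 < Real.log n + a n + 2 * k n - 1 + 2 * Real.log (k n) + Real.log (Real.log n) ∧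
      (1 - ε) * a n * n / (a n + Real.log n) <
        (a n : ℝ) * ((n : ℝ) - k n
            + (((a n : ℝ) - 1) / 2) * Real.log ((n : ℝ) / ((a n : ℝ) ^ 2 * Real.log n))
            - (n : ℝ) / (a n * Real.log n))
          / (Real.log n + a n + 2 * k n - 1 + 2 * Real.log (k n) + Real.log (Real.log n)) := by
  set δ : ℝ := ε / 6 with hδdef
  have hδ : 0 < δ := by positivity
  have hδ1 : δ < 1 / 6 := by rw [hδdef]; linarith
  have tL : Tendsto (fun n : ℕ => Real.log n) atTop atTop :=
    Real.tendsto_log_atTop.comp tendsto_natCast_atTop_atTop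
  have hKb := hk.bound hδ
  have hAb := ha.bound one_pos
  have hlogb : ∀ᶠ n : ℕ in atTop, ‖Real.log (Real.log n)‖ ≤ δ / 3 * ‖Real.log n‖ :=
    tL.eventually (Real.isLittleO_log_id_atTop.bound (by positivity))
  have hLbig : ∀ᶠ n : ℕ in atTop, max (1 / δ) 1 ≤ Real.log n :=
    tL.eventually_ge_atTop _
  filter_upwards [hKb, hAb, hlogb, hLbig, eventually_ge_atTop 1] with n hKb hAb hlogb hLbig hn1
  set L := Real.log n with hLdef
  set A := (a n : ℝ) with hAdef
  set K := (k n : ℝ) with hKdef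
  have hA1 : (1 : ℝ) ≤ A := by rw [hAdef]; exact_mod_cast ha1 n
  have hK1 : (1 : ℝ) ≤ K := by rw [hKdef]; exact_mod_cast hk1 n
  have hL1 : (1 : ℝ) ≤ L := le_trans (le_max_right _ _) hLbig
  have hLδ : 1 / δ ≤ L := le_trans (le_max_left _ _) hLbig
  have hL0 : (0 : ℝ) < L := by linarith
  have hn1' : (1 : ℝ) ≤ (n : ℝ) := by exact_mod_cast hn1
  have hn0 : (0 : ℝ) < (n : ℝ) := by linarith
  -- K ≤ δ L
  have hKL : K ≤ δ * L := by
    have := hKb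
    rwa [Real.norm_eq_abs, Real.norm_eq_abs, abs_of_nonneg (by linarith : (0:ℝ) ≤ K),
      abs_of_nonneg hL0.le] at this
  -- A ≤ √(n/L), hence A² L ≤ n
  have hnL0 : (0 : ℝ) ≤ (n : ℝ) / L := by positivity
  have hAs : A ≤ Real.sqrt ((n : ℝ) / L) := by
    have := hAb
    rw [Real.norm_eq_abs, Real.norm_eq_abs, abs_of_nonneg (by linarith : (0:ℝ) ≤ A),
      abs_of_nonneg (Real.sqrt_nonneg _), one_mul] at this
    exact this
  have hA2 : A ^ 2 ≤ (n : ℝ) / L := by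
    have h := pow_le_pow_left₀ (by linarith : (0:ℝ) ≤ A) hAs 2
    rwa [Real.sq_sqrt hnL0] at h
  have hA2L : A ^ 2 * L ≤ (n : ℝ) := by
    rw [← le_div_iff₀ hL0]
    exact hA2
  have hA2L0 : (0 : ℝ) < A ^ 2 * L := by positivity
  have hlogterm : 0 ≤ ((A - 1) / 2) * Real.log ((n : ℝ) / (A ^ 2 * L)) := by
    apply mul_nonneg (by linarith)
    apply Real.log_nonneg
    rw [le_div_iff₀ hA2L0]; linarith
  -- L ≤ n
  have hLn : L ≤ (n : ℝ) := Real.log_le_self (by positivity)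
  have hKn : K ≤ δ * n := le_trans hKL (by nlinarith)
  -- n/(A L) ≤ δ n
  have hdiv : (n : ℝ) / (A * L) ≤ δ * n := by
    have h1 : (n : ℝ) / (A * L) ≤ (n : ℝ) / L := by
      apply div_le_div_of_nonneg_left hn0.le hL0
      nlinarith
    have h2 : (n : ℝ) / L ≤ δ * n := by
      have hδL : 1 ≤ L * δ := (div_le_iff₀ hδ).mp hLδ
      rw [div_le_iff₀ hL0]
      nlinarith [mul_le_mul_of_nonneg_left hδL hn0.le]
    linarith
  -- logs
  have hlogL0 : 0 ≤ Real.log L := Real.log_nonneg hL1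
  have hlogK0 : 0 ≤ Real.log K := Real.log_nonneg hK1
  have hlogKL : Real.log K ≤ Real.log L := by
    apply Real.log_le_log (by linarith)
    nlinarith
  have hlogLδ : 3 * Real.log L ≤ δ * L := by
    have := hlogb
    rw [Real.norm_eq_abs, Real.norm_eq_abs, abs_of_nonneg hL0.le] at this
    have h := le_trans (le_abs_self _) this
    linarith
  -- denominator bounds
  have hD0 : 0 < L + A + 2 * K - 1 + 2 * Real.log K + Real.log L := by linarith
  have hDle : L + A + 2 * K - 1 + 2 * Real.log K + Real.log L ≤ (1 + 3 * δ) * (A + L) := by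
    nlinarith
  -- numerator bound
  have hN : (1 - 2 * δ) * n ≤ (n : ℝ) - K + ((A - 1) / 2) * Real.log ((n : ℝ) / (A ^ 2 * L))
      - (n : ℝ) / (A * L) := by linarith
  constructor
  · linarith
  · rw [div_lt_div_iff₀ (by linarith) hD0]
    have hAL0 : (0 : ℝ) < A + L := by linarith
    set N := (n : ℝ) - K + ((A - 1) / 2) * Real.log ((n : ℝ) / (A ^ 2 * L)) - (n : ℝ) / (A * L)
      with hNdef
    set D := L + A + 2 * K - 1 + 2 * Real.log K + Real.log L with hDdef
    have key : (1 - ε) * n * D < N * (A + L) := by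
      have h1 : (1 - ε) * n * D ≤ (1 - ε) * n * ((1 + 3 * δ) * (A + L)) := by
        apply mul_le_mul_of_nonneg_left hDle
        nlinarith
      have h2 : (1 - ε) * (1 + 3 * δ) < 1 - 2 * δ := by rw [hδdef]; nlinarith
      have h3 : (1 - ε) * n * ((1 + 3 * δ) * (A + L)) < (1 - 2 * δ) * n * (A + L) := by
        have := mul_pos hn0 hAL0
        nlinarith
      have h4 : (1 - 2 * δ) * n * (A + L) ≤ N * (A + L) :=
        mul_le_mul_of_nonneg_right hN hAL0.le
      linarith
    have hA0 : (0 : ℝ) < A := by linarith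
    calc (1 - ε) * A * (n : ℝ) * D = A * ((1 - ε) * (n : ℝ) * D) := by ring
      _ < A * (N * (A + L)) := mul_lt_mul_of_pos_left key hA0
      _ = A * N * (A + L) := by ring
end

section
/- Let a, k : ℕ → ℕ with a(n) ≥ 1 and k(n) ≥ 1 for all n, such that a(n) = o(√(n/ln n)) and k(n) = o(ln n) as n → ∞, and let ε ∈ (0,1). Then for all sufficiently large n the denominator ln n + a(n) + 2k(n) − 1 − 2·ln a(n) − ln ln n is positive and (1−ε)·a(n)·n/(a(n) + ln n) < a(n)·( n − k(n) + ((a(n)−1)/2)·ln( n/(a(n)²·ln n) ) − n/(a(n)·ln n) ) / ( ln n + a(n) + 2k(n) − 1 − 2·ln a(n) − ln ln n ). -/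
open Filter Real

private lemma stmt8_sum (A K L N ε : ℝ) (hA1 : 1 ≤ A) (hK1 : 1 ≤ K)
    (hε : 0 < ε) (hε1 : ε < 1) (hL20 : 20 / ε ≤ L) (hK' : K ≤ ε / 10 * L)
    (hn : 3 ≤ N) (hAn : A ≤ N) (hLn : L ≤ N) (hL : 20 ≤ L) :
    2 * N * K + (A + L) * K + N / L + N / A < ε * (N * L) := by
  have hn0 : (0 : ℝ) < N := by linarith
  have hL0 : (0 : ℝ) < L := by linarith
  have hεLge : (20 : ℝ) ≤ L * ε := (div_le_iff₀ hε).mp hL20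
  have hεL1 : (1 : ℝ) ≤ (ε / 5) * L := by
    have heq : (ε / 5) * L = (L * ε) / 5 := by ring
    rw [heq]; linarith
  have t1 : 2 * N * K ≤ (ε / 5) * (N * L) := by
    have h := mul_le_mul_of_nonneg_left hK' (by positivity : (0:ℝ) ≤ 2 * N)
    have heq : 2 * N * (ε / 10 * L) = (ε / 5) * (N * L) := by ring
    rw [heq] at h
    exact h
  have t2 : (A + L) * K ≤ (ε / 5) * (N * L) := by
    have hAL2n : A + L ≤ 2 * N := by linarith
    have h := mul_le_mul_of_nonneg_right hAL2n (by linarith : (0:ℝ) ≤ K)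
    linarith
  have hn5 : N ≤ (ε / 5) * (N * L) := by
    have h := mul_le_mul_of_nonneg_left hεL1 hn0.le
    have heq : N * ((ε / 5) * L) = (ε / 5) * (N * L) := by ring
    rw [heq] at h
    linarith
  have t3 : N / L ≤ (ε / 5) * (N * L) := by
    have h1 : N / L ≤ N := div_le_self hn0.le (by linarith)
    linarith
  have t4 : N / A ≤ (ε / 5) * (N * L) := by
    have h1 : N / A ≤ N := div_le_self hn0.le hA1
    linarith
  have hpos : (0 : ℝ) < (ε / 5) * (N * L) := by positivity
  linarith

private lemma stmt8_key (A K L N ε : ℝ) (hA1 : 1 ≤ A) (hK1 : 1 ≤ K)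
    (hε : 0 < ε) (hε1 : ε < 1) (hL20 : 20 / ε ≤ L) (hK' : K ≤ ε / 10 * L)
    (hn : 3 ≤ N) (hAn : A ≤ N) (hLn : L ≤ N) (hL : 20 ≤ L) :
    (1 - ε) * N * (L + A + 2 * K) < (N - K - N / (A * L)) * (A + L) := by
  have hsum := stmt8_sum A K L N ε hA1 hK1 hε hε1 hL20 hK' hn hAn hLn hL
  have hn0 : (0 : ℝ) < N := by linarith
  have hL0 : (0 : ℝ) < L := by linarith
  have hA0 : (0 : ℝ) < A := by linarith
  have hK0 : (0 : ℝ) < K := by linarith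
  have hexp : (N - K - N / (A * L)) * (A + L)
      = N * A + N * L - K * (A + L) - (N / L + N / A) := by
    field_simp
  have hε2 : ε * (N * L) ≤ ε * N * (L + A + 2 * K) := by
    have h := mul_nonneg (mul_nonneg hε.le hn0.le) (by linarith : (0:ℝ) ≤ A + 2 * K)
    have heq : ε * N * (L + A + 2 * K) = ε * (N * L) + ε * N * (A + 2 * K) := by ring
    linarith
  have hexpand : (1 - ε) * N * (L + A + 2 * K)
      = N * A + N * L + 2 * N * K - ε * N * (L + A + 2 * K) := by ring
  rw [hexp]
  linarith

private lemma stmt8_core (A K L N ε : ℝ) (hA1 : 1 ≤ A) (hK1 : 1 ≤ K)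
    (hε : 0 < ε) (hε1 : ε < 1) (hL20 : 20 / ε ≤ L) (hK' : K ≤ ε / 10 * L)
    (hA' : A ≤ Real.sqrt (N / L)) (hn : 3 ≤ N) (hLn : L ≤ N)
    (hlogL : Real.log L ≤ L - 1) :
    0 < L + A + 2 * K - 1 - 2 * Real.log A - Real.log L ∧
    (1 - ε) * A * N / (A + L) <
      A * (N - K + ((A - 1) / 2) * Real.log (N / (A ^ 2 * L)) - N / (A * L))
        / (L + A + 2 * K - 1 - 2 * Real.log A - Real.log L) := by
  have hA0 : (0 : ℝ) < A := by linarith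
  have hK0 : (0 : ℝ) < K := by linarith
  have hn0 : (0 : ℝ) < N := by linarith
  have h20 : (20 : ℝ) ≤ 20 / ε := by
    rw [le_div_iff₀ hε]; nlinarith
  have hL : (20 : ℝ) ≤ L := le_trans h20 hL20
  have hL0 : (0 : ℝ) < L := by linarith
  have hnL0 : (0 : ℝ) ≤ N / L := by positivity
  have hA2 : A ^ 2 ≤ N / L := by
    have h := Real.sq_sqrt hnL0
    nlinarith [Real.sqrt_nonneg (N / L)]
  have hA2L : A ^ 2 * L ≤ N := (le_div_iff₀ hL0).mp hA2
  have hAn : A ≤ N := by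
    have h1 : Real.sqrt (N / L) ≤ Real.sqrt N :=
      Real.sqrt_le_sqrt (by rw [div_le_iff₀ hL0]; nlinarith)
    have h2 : Real.sqrt N ≤ N := by
      have h3 : Real.sqrt N ≤ Real.sqrt (N ^ 2) := Real.sqrt_le_sqrt (by nlinarith)
      rwa [Real.sqrt_sq hn0.le] at h3
    linarith
  -- bound on log A : 2 log A ≤ A
  have hsqA : Real.sqrt A ^ 2 = A := Real.sq_sqrt hA0.le
  have hAlogA : 2 * Real.log A ≤ A := by
    have h1 : Real.log (Real.sqrt A) ≤ Real.sqrt A - 1 :=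
      Real.log_le_sub_one_of_pos (Real.sqrt_pos.mpr hA0)
    rw [Real.log_sqrt hA0.le] at h1
    have hs : (Real.sqrt A - 2) ^ 2 = A - 4 * Real.sqrt A + 4 := by
      have h : (Real.sqrt A - 2) ^ 2 = Real.sqrt A ^ 2 - 4 * Real.sqrt A + 4 := by ring
      rw [h, hsqA]
    have hs0 := sq_nonneg (Real.sqrt A - 2)
    linarith
  set D := L + A + 2 * K - 1 - 2 * Real.log A - Real.log L with hDdef
  clear_value D
  have hD : (0 : ℝ) < D := by rw [hDdef]; linarith
  have hlogA0 : (0 : ℝ) ≤ Real.log A := Real.log_nonneg hA1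
  have hlogL0 : (0 : ℝ) ≤ Real.log L := Real.log_nonneg (by linarith)
  have hDle : D ≤ L + A + 2 * K := by rw [hDdef]; linarith
  have hAL0 : (0 : ℝ) < A + L := by linarith
  refine ⟨hD, ?_⟩
  have hlogT : (0 : ℝ) ≤ Real.log (N / (A ^ 2 * L)) := by
    apply Real.log_nonneg
    rw [le_div_iff₀ (by positivity)]
    linarith
  have hkey := stmt8_key A K L N ε hA1 hK1 hε hε1 hL20 hK' hn hAn hLn hL
  have h1ε : (0 : ℝ) ≤ (1 - ε) * N := by nlinarith
  have h1 : (1 - ε) * N * D ≤ (1 - ε) * N * (L + A + 2 * K) :=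
    mul_le_mul_of_nonneg_left hDle h1ε
  have hterm : (0 : ℝ) ≤ ((A - 1) / 2) * Real.log (N / (A ^ 2 * L)) :=
    mul_nonneg (by linarith) hlogT
  have h2 : (N - K - N / (A * L)) * (A + L)
      ≤ (N - K + ((A - 1) / 2) * Real.log (N / (A ^ 2 * L)) - N / (A * L)) * (A + L) :=
    mul_le_mul_of_nonneg_right (by linarith) hAL0.le
  have hmain : (1 - ε) * N * D
      < (N - K + ((A - 1) / 2) * Real.log (N / (A ^ 2 * L)) - N / (A * L)) * (A + L) := by
    linarith
  rw [div_lt_div_iff₀ hAL0 hD]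
  calc (1 - ε) * A * N * D = A * ((1 - ε) * N * D) := by ring
    _ < A * ((N - K + ((A - 1) / 2) * Real.log (N / (A ^ 2 * L))
          - N / (A * L)) * (A + L)) := mul_lt_mul_of_pos_left hmain hA0
    _ = A * (N - K + ((A - 1) / 2) * Real.log (N / (A ^ 2 * L))
          - N / (A * L)) * (A + L) := by ring

/-- Contradiction step (Case `s ≤ r`) in the proof of Theorem 2.11(i). -/
theorem stmt8 (a k : ℕ → ℕ) (ha1 : ∀ n, 1 ≤ a n) (hk1 : ∀ n, 1 ≤ k n)
    (ha : (fun n : ℕ => (a n : ℝ)) =o[atTop] fun n : ℕ => Real.sqrt (n / Real.log n))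
    (hk : (fun n : ℕ => (k n : ℝ)) =o[atTop] fun n : ℕ => Real.log n)
    (ε : ℝ) (hε : 0 < ε) (hε1 : ε < 1) :
    ∀ᶠ n : ℕ in atTop,
      0 < Real.log n + a n + 2 * k n - 1 - 2 * Real.log (a n) - Real.log (Real.log n) ∧
      (1 - ε) * a n * n / (a n + Real.log n) <
        (a n : ℝ) * ((n : ℝ) - k n
            + (((a n : ℝ) - 1) / 2) * Real.log ((n : ℝ) / ((a n : ℝ) ^ 2 * Real.log n))
            - (n : ℝ) / (a n * Real.log n))
          / (Real.log n + a n + 2 * k n - 1 - 2 * Real.log (a n) - Real.log (Real.log n)) := by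
  have hLtend : Tendsto (fun n : ℕ => Real.log n) atTop atTop :=
    Real.tendsto_log_atTop.comp tendsto_natCast_atTop_atTop
  filter_upwards [ha.def one_pos, hk.def (show (0:ℝ) < ε / 10 by positivity),
    hLtend.eventually_ge_atTop (20 / ε), eventually_ge_atTop 3] with n hAb hKb hL20 hn3
  have hA1 : (1 : ℝ) ≤ (a n : ℝ) := by exact_mod_cast ha1 n
  have hK1 : (1 : ℝ) ≤ (k n : ℝ) := by exact_mod_cast hk1 n
  have hn : (3 : ℝ) ≤ (n : ℝ) := by exact_mod_cast hn3
  have hn0 : (0 : ℝ) < (n : ℝ) := by linarith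
  have hL0 : (0 : ℝ) < Real.log n := by
    have h20 : (20 : ℝ) ≤ 20 / ε := by rw [le_div_iff₀ hε]; nlinarith
    linarith
  have hK' : (k n : ℝ) ≤ ε / 10 * Real.log n := by
    have h := hKb
    rw [Real.norm_eq_abs, Real.norm_eq_abs, abs_of_nonneg (by linarith : (0:ℝ) ≤ (k n : ℝ)),
      abs_of_nonneg hL0.le] at h
    exact h
  have hA' : (a n : ℝ) ≤ Real.sqrt ((n : ℝ) / Real.log n) := by
    have h := hAb
    rw [Real.norm_eq_abs, Real.norm_eq_abs, one_mul,
      abs_of_nonneg (by linarith : (0:ℝ) ≤ (a n : ℝ)),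
      abs_of_nonneg (Real.sqrt_nonneg _)] at h
    exact h
  have hlogL : Real.log (Real.log n) ≤ Real.log n - 1 := Real.log_le_sub_one_of_pos hL0
  have hLn : Real.log n ≤ (n : ℝ) := (Real.log_le_sub_one_of_pos hn0).trans (by linarith)
  exact stmt8_core (a n) (k n) (Real.log n) (n : ℝ) ε hA1 hK1 hε hε1 hL20 hK' hA' hn hLn hlogL
end

section
/- Let 0 < δ < ε < 1 and let a, k : ℕ → ℕ with a(n) ≥ 1 and k(n) ≥ 1 for all n, such that a(n) = o(√(n/ln n)) and k(n) = o(ln n) as n → ∞. Then for all sufficiently large n, (1−ε)·a(n)·n/(a(n) + ln n) < a(n)·( (1−δ)·n + ((a(n)−1)/2)·ln( n/(a(n)²·ln n) ) − n/(a(n)·ln n) ) / ( ln n + a(n) + 2k(n) − 1 + 2·ln k(n) + ln ln n ). -/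
open Filter Real

set_option maxHeartbeats 1600000 in
/-- Contradiction step (Case `s > r`) in the proof of Theorem 2.12(i). -/
theorem stmt10 (δ ε : ℝ) (hδ : 0 < δ) (hδε : δ < ε) (hε1 : ε < 1)
    (a k : ℕ → ℕ) (ha1 : ∀ n, 1 ≤ a n) (hk1 : ∀ n, 1 ≤ k n)
    (ha : (fun n : ℕ => (a n : ℝ)) =o[atTop] fun n : ℕ => Real.sqrt (n / Real.log n))
    (hk : (fun n : ℕ => (k n : ℝ)) =o[atTop] fun n : ℕ => Real.log n) :
    ∀ᶠ n : ℕ in atTop,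
      (1 - ε) * a n * n / (a n + Real.log n) <
        (a n : ℝ) * ((1 - δ) * n
            + (((a n : ℝ) - 1) / 2) * Real.log ((n : ℝ) / ((a n : ℝ) ^ 2 * Real.log n))
            - (n : ℝ) / (a n * Real.log n))
          / (Real.log n + a n + 2 * k n - 1 + 2 * Real.log (k n) + Real.log (Real.log n)) := by
  set η : ℝ := (ε - δ) / 3 with hηdef
  have hη : 0 < η := by rw [hηdef]; linarith
  have hLtop : Tendsto (fun n : ℕ => Real.log n) atTop atTop :=
    Real.tendsto_log_atTop.comp tendsto_natCast_atTop_atTop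
  have e1 := hLtop.eventually_ge_atTop (max (max (1/η) (16/η^2)) 1)
  have e2 := ha.def one_pos
  have e3 := hk.def (show (0:ℝ) < η/8 by positivity)
  have e4 : ∀ᶠ n : ℕ in atTop, (1:ℕ) ≤ n := eventually_ge_atTop 1
  filter_upwards [e1, e2, e3, e4] with n hL hAb hKb hn
  have hA1 : (1:ℝ) ≤ (a n : ℝ) := by exact_mod_cast ha1 n
  have hK1 : (1:ℝ) ≤ (k n : ℝ) := by exact_mod_cast hk1 n
  have hn1 : (1:ℝ) ≤ (n : ℝ) := by exact_mod_cast hn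
  have hL1 : (1:ℝ) ≤ Real.log n := le_trans (le_max_right _ 1) hL
  have hLη : 1/η ≤ Real.log n := le_trans (le_trans (le_max_left _ _) (le_max_left _ _)) hL
  have hL16 : 16/η^2 ≤ Real.log n :=
    le_trans (le_trans (le_max_right _ _) (le_max_left _ _)) hL
  have hLpos : (0:ℝ) < Real.log n := lt_of_lt_of_le one_pos hL1
  set Nn := (n : ℝ) with hNndef
  set L := Real.log Nn with hLdef
  set A := (a n : ℝ) with hAdef
  set K := (k n : ℝ) with hKdef
  clear_value η Nn L A K
  -- a(n) ≤ √(n / log n), hence a(n)² log n ≤ n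
  have hAs : A ≤ Real.sqrt (Nn / L) := by
    have h := hAb
    simp only [one_mul, Real.norm_eq_abs] at h
    calc A ≤ |A| := le_abs_self _
      _ ≤ |Real.sqrt (Nn / L)| := h
      _ = Real.sqrt (Nn / L) := abs_of_nonneg (Real.sqrt_nonneg _)
  have hA2 : A ^ 2 ≤ Nn / L := by
    have h := pow_le_pow_left₀ (by linarith : (0:ℝ) ≤ A) hAs 2
    rwa [Real.sq_sqrt (div_nonneg (by linarith) hLpos.le)] at h
  have hA2L : A ^ 2 * L ≤ Nn := by
    have := (le_div_iff₀ hLpos).mp hA2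
    linarith
  -- k(n) ≤ (η/8) log n
  have hKs : K ≤ η/8 * L := by
    have h := hKb
    simp only [Real.norm_eq_abs] at h
    calc K ≤ |K| := le_abs_self _
      _ ≤ η/8 * |L| := h
      _ = η/8 * L := by rw [abs_of_nonneg hLpos.le]
  -- log L ≤ (η/2) L
  have hsqL : 4/η ≤ Real.sqrt L := by
    rw [show (4:ℝ)/η = Real.sqrt ((4/η)^2) from (Real.sqrt_sq (by positivity)).symm]
    exact Real.sqrt_le_sqrt (by rw [div_pow]; norm_num; linarith)
  have h4ηs : 4 ≤ η * Real.sqrt L := by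
    rw [div_le_iff₀ hη] at hsqL; linarith
  have hs : Real.sqrt L ^ 2 = L := Real.sq_sqrt hLpos.le
  have hlogLs : Real.log L ≤ 2 * Real.sqrt L := by
    have h := Real.log_le_sub_one_of_pos (Real.sqrt_pos.mpr hLpos)
    rw [Real.log_sqrt hLpos.le] at h
    nlinarith [Real.sqrt_nonneg L]
  have hlogL2 : Real.log L ≤ η/2 * L := by
    have key : 4 * Real.sqrt L ≤ η * L := by
      nlinarith [mul_nonneg (sub_nonneg.mpr h4ηs) (Real.sqrt_nonneg L)]
    linarith
  have hlogL0 : 0 ≤ Real.log L := Real.log_nonneg hL1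
  have hlogK0 : 0 ≤ Real.log K := Real.log_nonneg hK1
  have hlogKK : Real.log K ≤ K - 1 := Real.log_le_sub_one_of_pos (by linarith)
  set P := (1 - δ) * Nn + (A - 1)/2 * Real.log (Nn / (A^2 * L)) - Nn / (A * L) with hPdef
  set D := L + A + 2*K - 1 + 2*Real.log K + Real.log L with hDdef
  clear_value P D
  -- denominator bounds
  have hDpos : 0 < D := by rw [hDdef]; linarith
  have hDle : D ≤ (1+η) * (A + L) := by
    have hηA : 0 ≤ η * A := mul_nonneg hη.le (by linarith)
    have hr : (1+η) * (A + L) = A + L + η*A + η*L := by ring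
    rw [hDdef, hr]
    linarith
  -- numerator bounds
  have hALpos : 0 < A + L := by linarith
  have hlognn : 0 ≤ Real.log (Nn / (A^2 * L)) := by
    apply Real.log_nonneg
    rw [le_div_iff₀ (mul_pos (pow_pos (by linarith) 2) hLpos)]
    linarith
  have hmid : 0 ≤ (A - 1)/2 * Real.log (Nn / (A^2 * L)) :=
    mul_nonneg (by linarith) hlognn
  have hdivle : Nn / (A * L) ≤ η * Nn := by
    have h1 : Nn / (A * L) ≤ Nn / L := by
      exact div_le_div_of_nonneg_left (by linarith) hLpos
        (le_mul_of_one_le_left hLpos.le hA1)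
    have h2 : Nn / L ≤ η * Nn := by
      rw [div_le_iff₀ hLpos]
      have h1η : 1 ≤ η * L := by
        rw [div_le_iff₀ hη] at hLη; linarith
      nlinarith
    linarith
  have hNlb : (1 - δ - η) * Nn ≤ P := by
    rw [hPdef]
    have hr : (1 - δ - η) * Nn = (1 - δ) * Nn - η * Nn := by ring
    rw [hr]
    linarith
  -- the key comparison
  have hεη : 0 < ε * η := mul_pos (hδ.trans hδε) hη
  have hc : (1-ε) * (1+η) < 1 - δ - η := by nlinarith [hηdef]
  have hNpos : (0:ℝ) < Nn := by linarith
  have key : (1-ε) * Nn * D < P * (A + L) := by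
    have h1 : (1-ε) * Nn * D ≤ (1-ε) * Nn * ((1+η) * (A + L)) :=
      mul_le_mul_of_nonneg_left hDle (mul_nonneg (by linarith) hNpos.le)
    have h2 : (1-ε) * Nn * ((1+η) * (A + L)) < (1 - δ - η) * Nn * (A + L) := by
      have h := mul_lt_mul_of_pos_right hc (mul_pos hNpos hALpos)
      calc (1-ε) * Nn * ((1+η) * (A + L)) = (1-ε) * (1+η) * (Nn * (A + L)) := by ring
        _ < (1 - δ - η) * (Nn * (A + L)) := h
        _ = (1 - δ - η) * Nn * (A + L) := by ring
    have h3 : (1 - δ - η) * Nn * (A + L) ≤ P * (A + L) :=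
      mul_le_mul_of_nonneg_right hNlb hALpos.le
    linarith
  rw [div_lt_div_iff₀ hALpos hDpos]
  have hApos : (0:ℝ) < A := by linarith
  calc (1-ε) * A * Nn * D = A * ((1-ε) * Nn * D) := by ring
    _ < A * (P * (A + L)) := mul_lt_mul_of_pos_left key hApos
    _ = A * P * (A + L) := by ring
end

section
/- Let a : ℕ → ℕ with a(n) ≥ 1 for all n and a(n) = o(√n) as n → ∞, let ε > 0, and set h(n) = ⌈ n / ( 2·(a(n) + ln n) ) ⌉. Then for all sufficiently large n, (1+ε)·a(n)·n/(a(n) + ln n) > a(n)·(a(n)+1)/2 + (a(n)+1)·(h(n)−1). -/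
open Filter Real Asymptotics

/-- The target clique size `h(n) = ⌈n / (2(a(n) + ln n))⌉` from Theorem 2.17. -/
noncomputable def cliqueSize (a : ℕ → ℕ) (n : ℕ) : ℕ :=
  ⌈(n : ℝ) / (2 * ((a n : ℝ) + Real.log n))⌉₊

/-- In the proof of Theorem 2.17: Breaker's bias `b = (1+ε)·a·n/(a+ln n)` eventually
exceeds `C(a+1,2) + (a+1)(h−1)`, the number of edges needed to enlarge the clique. -/
theorem stmt13 (a : ℕ → ℕ) (ha1 : ∀ n, 1 ≤ a n)
    (ha : (fun n : ℕ => (a n : ℝ)) =o[atTop] fun n : ℕ => Real.sqrt n)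
    (ε : ℝ) (hε : 0 < ε) :
    ∀ᶠ n : ℕ in atTop,
      (1 + ε) * a n * n / (a n + Real.log n) >
        (a n : ℝ) * ((a n : ℝ) + 1) / 2 + ((a n : ℝ) + 1) * ((cliqueSize a n : ℝ) - 1) := by
  -- log n = o(sqrt n)
  have hlog : (fun n : ℕ => Real.log n) =o[atTop] fun n : ℕ => Real.sqrt n := by
    have h := (isLittleO_log_rpow_atTop (by norm_num : (0:ℝ) < 1/2)).comp_tendsto
      tendsto_natCast_atTop_atTop
    exact h.congr (fun n => rfl) (fun n => (Real.sqrt_eq_rpow _).symm)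
  -- 1 = O(a)
  have hone : (fun _ : ℕ => (1:ℝ)) =O[atTop] fun n : ℕ => (a n : ℝ) := by
    refine isBigO_of_le _ fun n => ?_
    simp only [norm_one, Real.norm_natCast]
    exact_mod_cast ha1 n
  have hA1 : (fun n : ℕ => (a n : ℝ) + 1) =o[atTop] fun n : ℕ => Real.sqrt n :=
    ha.add (hone.trans_isLittleO ha)
  have hprod : (fun n : ℕ => ((a n : ℝ) + 1) * ((a n : ℝ) + Real.log n)) =o[atTop]
      fun n : ℕ => (n : ℝ) := by
    have := hA1.mul (ha.add hlog)
    refine this.congr (fun n => rfl) (fun n => ?_)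
    exact Real.mul_self_sqrt (Nat.cast_nonneg n)
  have hE := hprod.def hε
  filter_upwards [hE, eventually_ge_atTop 1] with n hEn hn1
  set A : ℝ := (a n : ℝ) with hA
  set L : ℝ := Real.log n with hL
  set N : ℝ := (n : ℝ) with hN
  have hA1' : (1:ℝ) ≤ A := by rw [hA]; exact_mod_cast ha1 n
  have hN1 : (1:ℝ) ≤ N := by rw [hN]; exact_mod_cast hn1
  have hL0 : 0 ≤ L := Real.log_natCast_nonneg n
  have hD : 0 < A + L := by linarith
  have hEn' : (A + 1) * (A + L) ≤ ε * N := by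
    have := hEn
    rwa [Real.norm_eq_abs, Real.norm_eq_abs, abs_of_nonneg (by positivity),
      abs_of_nonneg (by positivity)] at this
  -- bound on ceiling
  have hceil : (cliqueSize a n : ℝ) < N / (2 * (A + L)) + 1 := by
    have h0 : (0:ℝ) ≤ N / (2 * (A + L)) := by positivity
    exact_mod_cast Nat.ceil_lt_add_one h0
  have hH : ((cliqueSize a n : ℝ) - 1) * (2 * (A + L)) < N := by
    have h2D : 0 < 2 * (A + L) := by linarith
    have : (cliqueSize a n : ℝ) - 1 < N / (2 * (A + L)) := by linarith
    calc ((cliqueSize a n : ℝ) - 1) * (2 * (A + L))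
        < N / (2 * (A + L)) * (2 * (A + L)) := by
          exact mul_lt_mul_of_pos_right this h2D
      _ = N := div_mul_cancel₀ _ (ne_of_gt h2D)
  rw [gt_iff_lt, lt_div_iff₀ hD]
  nlinarith [mul_le_mul_of_nonneg_left hEn' (by positivity : (0:ℝ) ≤ A / 2),
    mul_lt_mul_of_pos_left hH (by positivity : (0:ℝ) < (A + 1) / 2),
    mul_pos (mul_pos hε (by linarith : (0:ℝ) < A)) (by linarith : (0:ℝ) < N)]
end

section
/- Let δ be a real number with 0 < δ < 4/(e⁷·10⁴), where e is Euler's number. Then the sum S(n) = Σ_{i=6}^{⌊δ⁵·n⌋} ( (e⁷·10⁴/4)·i/(δ⁴·n) )^i tends to 0 as n → ∞ (the sum being 0 when ⌊δ⁵·n⌋ < 6). -/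
open Filter Real

/-- Concluding estimate in the proof of Lemma 3.6: for `0 < δ < 4/(e⁷·10⁴)`, the
sum `Σ_{i=6}^{⌊δ⁵n⌋} ((e⁷·10⁴/4)·i/(δ⁴·n))^i` tends to `0` as `n → ∞`. -/
theorem stmt16 (δ : ℝ) (hδ : 0 < δ) (hδ' : δ < 4 / (Real.exp 1 ^ 7 * 10 ^ 4)) :
    Tendsto
      (fun n : ℕ =>
        ∑ i ∈ Finset.Icc 6 ⌊δ ^ 5 * n⌋₊,
          ((Real.exp 1 ^ 7 * 10 ^ 4 / 4) * (i : ℝ) / (δ ^ 4 * n)) ^ i)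
      atTop (nhds 0) := by
  set C : ℝ := Real.exp 1 ^ 7 * 10 ^ 4 / 4 with hC
  have hCpos : 0 < C := by positivity
  set β : ℝ := C * δ with hβdef
  have hβ0 : 0 < β := mul_pos hCpos hδ
  have hβ1 : β < 1 := by
    have h1 : δ < 1 / C := by
      rw [hC, one_div_div]; exact hδ'
    calc β = C * δ := rfl
      _ < C * (1 / C) := by exact mul_lt_mul_of_pos_left h1 hCpos
      _ = 1 := by field_simp
  -- the dominating sequence
  set g : ℕ → ℝ := fun n =>
    δ ^ 5 * n * ((1 / (δ ^ 5 * Real.sqrt n)) ^ 6 + β ^ (Nat.sqrt n + 1)) with hg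
  have key : ∀ᶠ n : ℕ in atTop,
      (∑ i ∈ Finset.Icc 6 ⌊δ ^ 5 * n⌋₊, (C * (i : ℝ) / (δ ^ 4 * n)) ^ i) ≤ g n := by
    filter_upwards [eventually_ge_atTop (max 1 ⌈(1 / δ ^ 5) ^ 2⌉₊)] with n hn
    have hn1 : 1 ≤ n := le_trans (le_max_left _ _) hn
    have hn0 : (0 : ℝ) < n := by exact_mod_cast Nat.lt_of_lt_of_le Nat.zero_lt_one hn1
    have hsqrt_pos : 0 < Real.sqrt n := Real.sqrt_pos.2 hn0
    have hs : 1 ≤ δ ^ 5 * Real.sqrt n := by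
      have h2 : (1 / δ ^ 5) ^ 2 ≤ (n : ℝ) := by
        calc (1 / δ ^ 5) ^ 2 ≤ (⌈(1 / δ ^ 5) ^ 2⌉₊ : ℝ) := Nat.le_ceil _
          _ ≤ (n : ℝ) := by exact_mod_cast le_trans (le_max_right _ _) hn
      have h3 : 1 / δ ^ 5 ≤ Real.sqrt n := by
        rw [show (1:ℝ) / δ ^ 5 = Real.sqrt ((1 / δ ^ 5) ^ 2) by
          rw [Real.sqrt_sq (by positivity)]]
        exact Real.sqrt_le_sqrt h2
      calc (1:ℝ) = δ ^ 5 * (1 / δ ^ 5) := by field_simp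
        _ ≤ δ ^ 5 * Real.sqrt n := by
          exact mul_le_mul_of_nonneg_left h3 (by positivity)
    set u : ℝ := 1 / (δ ^ 5 * Real.sqrt n) with hu
    have hu0 : 0 < u := by positivity
    have hu1 : u ≤ 1 := by rw [hu]; exact div_le_one_of_le₀ hs (by positivity)
    set K := ⌊δ ^ 5 * n⌋₊ with hKdef
    set m := Nat.sqrt n with hm
    have hKle : (K : ℝ) ≤ δ ^ 5 * n := Nat.floor_le (by positivity)
    have termle : ∀ i ∈ Finset.Icc 6 K,
        (C * (i : ℝ) / (δ ^ 4 * n)) ^ i ≤ u ^ 6 + β ^ (m + 1) := by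
      intro i hi
      rw [Finset.mem_Icc] at hi
      have hx : C * (i : ℝ) / (δ ^ 4 * n) = β * ((i : ℝ) / (δ ^ 5 * n)) := by
        rw [hβdef]; field_simp
      have hx0 : 0 ≤ C * (i : ℝ) / (δ ^ 4 * n) := by positivity
      rcases le_or_gt i m with hcase | hcase
      · -- small i : term ≤ u ^ 6
        have him : (i : ℝ) ≤ Real.sqrt n := by
          have h1 : (i : ℝ) ≤ (m : ℝ) := by exact_mod_cast hcase
          refine h1.trans ?_
          rw [show (m : ℝ) = Real.sqrt ((m : ℝ) ^ 2) by
            rw [Real.sqrt_sq (by positivity)]]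
          exact Real.sqrt_le_sqrt (by exact_mod_cast Nat.sqrt_le' n)
        have hequ : Real.sqrt n / (δ ^ 5 * n) = u := by
          rw [hu]
          rw [div_eq_div_iff (by positivity) (by positivity)]
          have : Real.sqrt n * Real.sqrt n = (n : ℝ) := Real.mul_self_sqrt hn0.le
          nlinarith [this]
        have hxu : C * (i : ℝ) / (δ ^ 4 * n) ≤ u := by
          rw [hx]
          have h4 : (i : ℝ) / (δ ^ 5 * n) ≤ u := by
            rw [← hequ]; gcongr
          calc β * ((i : ℝ) / (δ ^ 5 * n)) ≤ 1 * u :=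
                mul_le_mul hβ1.le h4 (by positivity) zero_le_one
            _ = u := one_mul u
        calc (C * (i : ℝ) / (δ ^ 4 * n)) ^ i ≤ u ^ i := pow_le_pow_left₀ hx0 hxu i
          _ ≤ u ^ 6 := pow_le_pow_of_le_one hu0.le hu1 hi.1
          _ ≤ u ^ 6 + β ^ (m + 1) := le_add_of_nonneg_right (by positivity)
      · -- large i : term ≤ β ^ (m+1)
        have hxβ : C * (i : ℝ) / (δ ^ 4 * n) ≤ β := by
          rw [hx]
          have h1 : (i : ℝ) / (δ ^ 5 * n) ≤ 1 := by
            apply div_le_one_of_le₀ _ (by positivity)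
            calc (i : ℝ) ≤ (K : ℝ) := by exact_mod_cast hi.2
              _ ≤ δ ^ 5 * n := hKle
          calc β * ((i : ℝ) / (δ ^ 5 * n)) ≤ β * 1 :=
                mul_le_mul_of_nonneg_left h1 hβ0.le
            _ = β := mul_one β
        calc (C * (i : ℝ) / (δ ^ 4 * n)) ^ i ≤ β ^ i := pow_le_pow_left₀ hx0 hxβ i
          _ ≤ β ^ (m + 1) := pow_le_pow_of_le_one hβ0.le hβ1.le hcase
          _ ≤ u ^ 6 + β ^ (m + 1) := le_add_of_nonneg_left (by positivity)
    calc (∑ i ∈ Finset.Icc 6 K, (C * (i : ℝ) / (δ ^ 4 * n)) ^ i)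
        ≤ ∑ _i ∈ Finset.Icc 6 K, (u ^ 6 + β ^ (m + 1)) := Finset.sum_le_sum termle
      _ = ((Finset.Icc 6 K).card : ℝ) * (u ^ 6 + β ^ (m + 1)) := by
          rw [Finset.sum_const, nsmul_eq_mul]
      _ ≤ δ ^ 5 * n * (u ^ 6 + β ^ (m + 1)) := by
          apply mul_le_mul_of_nonneg_right _ (by positivity)
          calc ((Finset.Icc 6 K).card : ℝ) ≤ (K : ℝ) := by
                rw [Nat.card_Icc]; exact_mod_cast by omega
            _ ≤ δ ^ 5 * n := hKle
  have hg0 : Tendsto g atTop (nhds 0) := by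
    rw [hg]
    have heq : (fun n : ℕ => δ ^ 5 * n * ((1 / (δ ^ 5 * Real.sqrt n)) ^ 6 + β ^ (Nat.sqrt n + 1)))
        = fun n : ℕ => δ ^ 5 * n * (1 / (δ ^ 5 * Real.sqrt n)) ^ 6
          + δ ^ 5 * n * β ^ (Nat.sqrt n + 1) := by
      funext n; ring
    rw [heq]
    have hA : Tendsto (fun n : ℕ => δ ^ 5 * n * (1 / (δ ^ 5 * Real.sqrt n)) ^ 6)
        atTop (nhds 0) := by
      have h2 : Tendsto (fun n : ℕ => (1 / δ ^ 25) * (1 / (n : ℝ) ^ 2)) atTop (nhds 0) := by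
        have := (tendsto_one_div_atTop_nhds_zero_nat.pow 2).const_mul (1 / δ ^ 25)
        simp only [mul_zero, ne_eq, OfNat.ofNat_ne_zero, not_false_eq_true, zero_pow] at this
        refine this.congr fun n => by rw [div_pow, one_pow]
      refine Tendsto.congr' ?_ h2
      filter_upwards [eventually_ge_atTop 1] with n hn
      have hn0 : (0 : ℝ) < n := by exact_mod_cast hn
      have hsq : Real.sqrt n ^ 6 = (n : ℝ) ^ 3 := by
        rw [show (6 : ℕ) = 2 * 3 by norm_num, pow_mul, Real.sq_sqrt hn0.le]
      rw [div_pow, one_pow, mul_pow, hsq]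
      field_simp
    have hB : Tendsto (fun n : ℕ => δ ^ 5 * n * β ^ (Nat.sqrt n + 1)) atTop (nhds 0) := by
      have houter : Tendsto (fun k : ℕ => ((k : ℝ) ^ 2 * β ^ k)) atTop (nhds 0) := by
        have hs : Summable (fun k : ℕ => (k : ℝ) ^ 2 * β ^ k) :=
          summable_pow_mul_geometric_of_norm_lt_one 2 (by
            rw [Real.norm_eq_abs, abs_of_pos hβ0]; exact hβ1)
        exact hs.tendsto_atTop_zero
      have hinner : Tendsto (fun n : ℕ => Nat.sqrt n + 1) atTop atTop := by
        apply tendsto_atTop_atTop.2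
        intro b
        exact ⟨b * b, fun n hn => le_trans (Nat.le_sqrt.2 hn) (Nat.le_succ _)⟩
      have hcomp := houter.comp hinner
      have hlim : Tendsto
          (fun n : ℕ => δ ^ 5 * (((Nat.sqrt n + 1 : ℕ) : ℝ) ^ 2 * β ^ (Nat.sqrt n + 1)))
          atTop (nhds 0) := by
        simpa using hcomp.const_mul (δ ^ 5)
      refine squeeze_zero' (Eventually.of_forall fun n => by positivity) ?_ hlim
      filter_upwards with n
      have h1 : (n : ℝ) ≤ ((Nat.sqrt n + 1 : ℕ) : ℝ) ^ 2 := by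
        exact_mod_cast (Nat.lt_succ_sqrt' n).le
      calc δ ^ 5 * n * β ^ (Nat.sqrt n + 1)
          ≤ δ ^ 5 * (((Nat.sqrt n + 1 : ℕ) : ℝ) ^ 2) * β ^ (Nat.sqrt n + 1) := by
            apply mul_le_mul_of_nonneg_right _ (by positivity)
            exact mul_le_mul_of_nonneg_left h1 (by positivity)
        _ = δ ^ 5 * (((Nat.sqrt n + 1 : ℕ) : ℝ) ^ 2 * β ^ (Nat.sqrt n + 1)) := by ring
    simpa using hA.add hB
  apply squeeze_zero' ?_ key hg0
  filter_upwards with n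
  apply Finset.sum_nonneg
  intro i _
  positivity
end
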